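/- arXiv:2504.03326 — 8 statements merged into one kernel-verified Lean document; each statement's English description precedes it below -/
import Mathlib

section
/- Suppose conditions (C1) and (C2) hold for the fixed pair η ≤ ξ and the site x. Then the flow problem P^x is feasible, i.e., there exists a solution f : T_2^x × T_1^x → [0,∞) to P^x. -/
/-!
Since `η_a ≤ ξ_b` forces `b ∈ S_2^x` when `a ∈ R_1^x`, and `a ∈ S_1^x` when `b ∈ R_2^x`, the flow
problem splits into two independent transportation problems: the demands `c¹` on `R_1^x` are to
be served by the supplies `c²` on `S_2^x`, and the demands `c²` on `R_2^x` by the supplies `c¹`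
on `S_1^x`. Conditions (C1) and (C2) are Hall's condition for these two problems, so Gale's
supply–demand theorem solves them. For finitely many demands and supplies it is proved by
induction on the number of nonzero ones: send along an edge as much as Hall's condition allows;
then a demand or a supply is exhausted, or some set of demands becomes tight and the problem
splits into the part inside that set and the part outside it. Infinitely many suppliers with
finite total supply are pooled into finitely many, one for each neighbourhood in a finite set of
demands; infinitely many demands are handled by compactness, the finite total supply keeping
mass from escaping to infinity.
-/

open scoped ENNReal

namespace IPS

/-- A change is identified with the function `δ : S → ℤ` that it adds (coordinatewise)
to a configuration.  `ChangeSet nbr x` is the set of changes involving site `x`: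
add or subtract `k ≥ 1` individuals at `x`, or add `k` at `x` while subtracting `l ≥ 1`
at a neighbour `y` of `x` (or vice versa).  Note that with this encoding the maps
`σ_{xy}^{-k,l}` and `σ_{yx}^{+l,k}` automatically coincide. -/
def ChangeSet {S : Type*} [DecidableEq S] (nbr : S → S → Prop) (x : S) : Set (S → ℤ) :=
  {δ | (∃ k : ℤ, 0 < k ∧ (δ = Pi.single x k ∨ δ = Pi.single x (-k))) ∨
       (∃ y, nbr x y ∧ ∃ k l : ℤ, 0 < k ∧ 0 < l ∧
          (δ = Pi.single x k + Pi.single y (-l) ∨ δ = Pi.single x (-k) + Pi.single y l))}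

/-- The configuration resulting from applying change `δ` to `ζ`. -/
def app {S : Type*} (ζ δ : S → ℤ) : S → ℤ := ζ + δ

/-- `δ` is applicable to `ζ` if the resulting configuration stays in `W^S`. -/
def Applicable {S : Type*} (W : Set ℤ) (ζ δ : S → ℤ) : Prop := ∀ z, ζ z + δ z ∈ W

variable {S : Type*} [DecidableEq S]

def R1 (W : Set ℤ) (nbr : S → S → Prop) (x : S) (η ξ : S → ℤ) : Set (S → ℤ) :=
  {a | a ∈ ChangeSet nbr x ∧ Applicable W η a ∧ ξ x < app η a x}

def S1 (W : Set ℤ) (nbr : S → S → Prop) (x : S) (η : S → ℤ) : Set (S → ℤ) :=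
  {a | a ∈ ChangeSet nbr x ∧ Applicable W η a ∧ app η a x < η x}

def T1 (W : Set ℤ) (nbr : S → S → Prop) (x : S) (η ξ : S → ℤ) : Set (S → ℤ) :=
  S1 W nbr x η ∪ R1 W nbr x η ξ

def R2 (W : Set ℤ) (nbr : S → S → Prop) (x : S) (η ξ : S → ℤ) : Set (S → ℤ) :=
  {b | b ∈ ChangeSet nbr x ∧ Applicable W ξ b ∧ app ξ b x < η x}

def S2 (W : Set ℤ) (nbr : S → S → Prop) (x : S) (ξ : S → ℤ) : Set (S → ℤ) :=
  {b | b ∈ ChangeSet nbr x ∧ Applicable W ξ b ∧ ξ x < app ξ b x}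

def T2 (W : Set ℤ) (nbr : S → S → Prop) (x : S) (η ξ : S → ℤ) : Set (S → ℤ) :=
  S2 W nbr x ξ ∪ R2 W nbr x η ξ

/-- `f` is a solution to the flow problem `P^x`: it is supported on pairs
`(b, a) ∈ T_2^x × T_1^x` with `η_a ≤ ξ_b`, its column sums equal `c¹_a` on `R_1^x`
and are at most `c¹_a` on `S_1^x`, and its row sums equal `c²_b` on `R_2^x` and are
at most `c²_b` on `S_2^x`. -/
structure IsSolution (W : Set ℤ) (nbr : S → S → Prop) (x : S) (η ξ : S → ℤ)
    (c1 c2 : (S → ℤ) → ℝ≥0∞) (f : (S → ℤ) → (S → ℤ) → ℝ≥0∞) : Prop where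
  domain : ∀ b a, f b a ≠ 0 → b ∈ T2 W nbr x η ξ ∧ a ∈ T1 W nbr x η ξ
  order : ∀ b a, f b a ≠ 0 → app η a ≤ app ξ b
  eq_R1 : ∀ a ∈ R1 W nbr x η ξ, ∑' b : T2 W nbr x η ξ, f b.1 a = c1 a
  le_S1 : ∀ a ∈ S1 W nbr x η, ∑' b : T2 W nbr x η ξ, f b.1 a ≤ c1 a
  eq_R2 : ∀ b ∈ R2 W nbr x η ξ, ∑' a : T1 W nbr x η ξ, f b a.1 = c2 b
  le_S2 : ∀ b ∈ S2 W nbr x ξ, ∑' a : T1 W nbr x η ξ, f b a.1 ≤ c2 b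

/-- `D_1^↑`. -/
def upArrow (W : Set ℤ) (nbr : S → S → Prop) (x : S) (η ξ : S → ℤ)
    (D : Set (S → ℤ)) : Set (S → ℤ) :=
  {b | b ∈ ChangeSet nbr x ∧ Applicable W ξ b ∧ ∃ a ∈ D, app η a ≤ app ξ b}

/-- `D_2^↓`. -/
def downArrow (W : Set ℤ) (nbr : S → S → Prop) (x : S) (η ξ : S → ℤ)
    (D : Set (S → ℤ)) : Set (S → ℤ) :=
  {a | a ∈ ChangeSet nbr x ∧ Applicable W η a ∧ ∃ b ∈ D, app η a ≤ app ξ b}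

/-- Condition (C1). -/
def CondC1 (W : Set ℤ) (nbr : S → S → Prop) (x : S) (η ξ : S → ℤ)
    (c1 c2 : (S → ℤ) → ℝ≥0∞) : Prop :=
  ∀ D1 ⊆ R1 W nbr x η ξ, ∑' a : D1, c1 a.1 ≤ ∑' b : upArrow W nbr x η ξ D1, c2 b.1

/-- Condition (C2). -/
def CondC2 (W : Set ℤ) (nbr : S → S → Prop) (x : S) (η ξ : S → ℤ)
    (c1 c2 : (S → ℤ) → ℝ≥0∞) : Prop :=
  ∀ D2 ⊆ R2 W nbr x η ξ, ∑' b : D2, c2 b.1 ≤ ∑' a : downArrow W nbr x η ξ D2, c1 a.1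

/-- `C^{+x}` for the configuration `ζ`. -/
def Cplus (W : Set ℤ) (nbr : S → S → Prop) (x : S) (ζ : S → ℤ) : Set (S → ℤ) :=
  {a | a ∈ ChangeSet nbr x ∧ Applicable W ζ a ∧ ζ x < app ζ a x ∧ ∀ z, z ≠ x → app ζ a z = ζ z}

/-- `C^{-x}` for the configuration `ζ`. -/
def Cminus (W : Set ℤ) (nbr : S → S → Prop) (x : S) (ζ : S → ℤ) : Set (S → ℤ) :=
  {a | a ∈ ChangeSet nbr x ∧ Applicable W ζ a ∧ app ζ a x < ζ x ∧ ∀ z, z ≠ x → app ζ a z = ζ z}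

/-- `C^{+xy}` for the configuration `ζ`. -/
def CplusPair (W : Set ℤ) (nbr : S → S → Prop) (x : S) (ζ : S → ℤ) (y : S) : Set (S → ℤ) :=
  {a | a ∈ ChangeSet nbr x ∧ Applicable W ζ a ∧ ζ x < app ζ a x ∧ app ζ a y < ζ y}

/-- `C^{-xy}` for the configuration `ζ`. -/
def CminusPair (W : Set ℤ) (nbr : S → S → Prop) (x : S) (ζ : S → ℤ) (y : S) : Set (S → ℤ) :=
  {a | a ∈ ChangeSet nbr x ∧ Applicable W ζ a ∧ app ζ a x < ζ x ∧ ζ y < app ζ a y}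

/-- `C^{+x•}` for the configuration `ζ`. -/
def CplusBull (W : Set ℤ) (nbr : S → S → Prop) (x : S) (ζ : S → ℤ) : Set (S → ℤ) :=
  {a | ∃ y, nbr x y ∧ a ∈ CplusPair W nbr x ζ y}

/-- `C^{-x•}` for the configuration `ζ`. -/
def CminusBull (W : Set ℤ) (nbr : S → S → Prop) (x : S) (ζ : S → ℤ) : Set (S → ℤ) :=
  {a | ∃ y, nbr x y ∧ a ∈ CminusPair W nbr x ζ y}

/-- `G_1^e`: the changes of `C` (for the first process) that preserve the order. -/
def G1 (η ξ : S → ℤ) (C : Set (S → ℤ)) : Set (S → ℤ) := {a | a ∈ C ∧ app η a ≤ ξ}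

/-- `B_1^e`: the changes of `C` (for the first process) that break the order. -/
def B1 (η ξ : S → ℤ) (C : Set (S → ℤ)) : Set (S → ℤ) := {a | a ∈ C ∧ ¬ app η a ≤ ξ}

/-- `G_2^e`: the changes of `C` (for the second process) that preserve the order. -/
def G2 (η ξ : S → ℤ) (C : Set (S → ℤ)) : Set (S → ℤ) := {b | b ∈ C ∧ η ≤ app ξ b}

/-- `B_2^e`: the changes of `C` (for the second process) that break the order. -/
def B2 (η ξ : S → ℤ) (C : Set (S → ℤ)) : Set (S → ℤ) := {b | b ∈ C ∧ ¬ η ≤ app ξ b}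

open Finset Filter Topology

section Transport

variable {α β : Type*}

structure IsTransport (R : β → α → Prop) (d : α → ℝ≥0∞) (s : β → ℝ≥0∞)
    (f : β → α → ℝ≥0∞) : Prop where
  support : ∀ b a, ¬ R b a → f b a = 0
  demand : ∀ a, ∑' b, f b a = d a
  supply : ∀ b, ∑' a, f b a ≤ s b

namespace IsTransport

variable {R : β → α → Prop} {d d' : α → ℝ≥0∞} {s s' : β → ℝ≥0∞} {f f' : β → α → ℝ≥0∞}

theorem zero (s : β → ℝ≥0∞) : IsTransport R 0 s 0 :=
  ⟨fun _ _ _ => rfl, fun _ => by simp, fun _ => by simp⟩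

theorem add (hf : IsTransport R d s f) (hf' : IsTransport R d' s' f') :
    IsTransport R (d + d') (s + s') (f + f') where
  support b a h := by simp [hf.support b a h, hf'.support b a h]
  demand a := by simp [ENNReal.tsum_add, hf.demand, hf'.demand]
  supply b := by simpa [ENNReal.tsum_add] using add_le_add (hf.supply b) (hf'.supply b)

theorem single [DecidableEq α] [DecidableEq β] {a₀ : α} {b₀ : β} (h : R b₀ a₀) (ε : ℝ≥0∞) :
    IsTransport R (Pi.single a₀ ε) (Pi.single b₀ ε) (Pi.single b₀ (Pi.single a₀ ε)) where
  support b a hba := by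
    rcases eq_or_ne b b₀ with rfl | hb
    · rw [Pi.single_eq_same, Pi.single_eq_of_ne (by rintro rfl; exact hba h)]
    · simp [hb]
  demand a := by rw [tsum_eq_single b₀] <;> simp +contextual [Pi.single_apply]
  supply b := by by_cases hb : b = b₀ <;> simp [Pi.single_apply, hb]

theorem le_demand (hf : IsTransport R d s f) (b : β) (a : α) : f b a ≤ d a :=
  hf.demand a ▸ ENNReal.le_tsum b

theorem le_supply (hf : IsTransport R d s f) (b : β) (a : α) : f b a ≤ s b :=
  (ENNReal.le_tsum a).trans (hf.supply b)

theorem rel_of_ne_zero (hf : IsTransport R d s f) {b : β} {a : α} (h : f b a ≠ 0) : R b a :=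
  not_imp_comm.1 (hf.support b a) h

theorem mem_of_ne_zero {A : Set α} {B : Set β} {c : α → ℝ≥0∞} {c' : β → ℝ≥0∞}
    (hf : IsTransport R (A.indicator c) (B.indicator c') f) {b : β} {a : α} (h : f b a ≠ 0) :
    a ∈ A ∧ b ∈ B :=
  ⟨Set.mem_of_indicator_ne_zero (ne_bot_of_le_ne_bot h (hf.le_demand b a)),
    Set.mem_of_indicator_ne_zero (ne_bot_of_le_ne_bot h (hf.le_supply b a))⟩

end IsTransport

section Finite

variable [Fintype β] {R : β → α → Prop}

open scoped Classical in
noncomputable def nbhd (R : β → α → Prop) (D : Finset α) : Finset β := {b | ∃ a ∈ D, R b a}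

theorem mem_nbhd {D : Finset α} {b : β} : b ∈ nbhd R D ↔ ∃ a ∈ D, R b a := by
  simp [nbhd]

theorem nbhd_union [DecidableEq α] [DecidableEq β] (D D' : Finset α) :
    nbhd R (D ∪ D') = nbhd R D ∪ nbhd R D' := by
  ext b
  simp only [mem_nbhd, mem_union, or_and_right, exists_or]

theorem nbhd_inter_subset [DecidableEq α] [DecidableEq β] (D D' : Finset α) :
    nbhd R (D ∩ D') ⊆ nbhd R D ∩ nbhd R D' := fun b hb => by
  obtain ⟨a, ha, h⟩ := mem_nbhd.1 hb
  exact mem_inter.2 ⟨mem_nbhd.2 ⟨a, (mem_inter.1 ha).1, h⟩, mem_nbhd.2 ⟨a, (mem_inter.1 ha).2, h⟩⟩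

def HallCondition (R : β → α → Prop) (d : α → ℝ≥0∞) (s : β → ℝ≥0∞) : Prop :=
  ∀ D : Finset α, ∑ a ∈ D, d a ≤ ∑ b ∈ nbhd R D, s b

namespace HallCondition

variable {d : α → ℝ≥0∞} {s : β → ℝ≥0∞}

theorem exists_rel (hall : HallCondition R d s) {a : α} (ha : d a ≠ 0) :
    ∃ b, R b a ∧ s b ≠ 0 := by
  have h := hall {a}
  rw [sum_singleton] at h
  obtain ⟨b, hb, hsb⟩ := exists_ne_zero_of_sum_ne_zero (ne_bot_of_le_ne_bot ha h)
  obtain ⟨a', ha', hR⟩ := mem_nbhd.1 hb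
  exact ⟨b, mem_singleton.1 ha' ▸ hR, hsb⟩

theorem restrict [DecidableEq α] [DecidableEq β] (hall : HallCondition R d s) (D : Finset α) :
    HallCondition R ((D : Set α).indicator d) ((nbhd R D : Set β).indicator s) := fun D' => by
  rw [sum_indicator_eq_sum_inter, sum_indicator_eq_sum_inter]
  exact (hall _).trans (sum_le_sum_of_subset (nbhd_inter_subset D' D))

theorem compl [DecidableEq α] [DecidableEq β] (hall : HallCondition R d s) {D : Finset α}
    (htight : ∑ a ∈ D, d a = ∑ b ∈ nbhd R D, s b) (hfin : ∑ a ∈ D, d a ≠ ⊤) :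
    HallCondition R ((D : Set α)ᶜ.indicator d) ((nbhd R D : Set β)ᶜ.indicator s) := fun D' => by
  rw [sum_indicator_eq_sum_filter D' (fun _ => d) (fun _ => (D : Set α)ᶜ) (fun a => a),
    sum_indicator_eq_sum_filter _ (fun _ => s) (fun _ => (nbhd R D : Set β)ᶜ) (fun b => b)]
  simp only [Set.mem_compl_iff, mem_coe, filter_notMem_eq_sdiff]
  have h := hall (D ∪ D')
  rw [nbhd_union, ← union_sdiff_self_eq_union (s := D), sum_union disjoint_sdiff,
    ← union_sdiff_self_eq_union (s := nbhd R D), sum_union disjoint_sdiff, ← htight] at h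
  exact (ENNReal.add_le_add_iff_left hfin).1 h

theorem of_add_single [DecidableEq α] [DecidableEq β] {a₀ : α} {b₀ : β} {ε : ℝ≥0∞}
    (hall : HallCondition R (d + Pi.single a₀ ε) (s + Pi.single b₀ ε)) (hε : ε ≠ ⊤)
    (hR : R b₀ a₀) (hslack : ∀ D, a₀ ∉ D → b₀ ∈ nbhd R D →
      ∑ a ∈ D, (d + Pi.single a₀ ε : α → ℝ≥0∞) a + ε ≤
        ∑ b ∈ nbhd R D, (s + Pi.single b₀ ε : β → ℝ≥0∞) b) :
    HallCondition R d s := fun D => by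
  have h := hall D
  by_cases hb : b₀ ∈ nbhd R D
  · refine ENNReal.le_of_add_le_add_right hε ?_
    by_cases ha : a₀ ∈ D
    · simpa [sum_add_distrib, ha, hb] using h
    · simpa [sum_add_distrib, ha, hb] using hslack D ha hb
  · have ha : a₀ ∉ D := fun ha => hb (mem_nbhd.2 ⟨a₀, ha, hR⟩)
    simpa [sum_add_distrib, ha, hb] using h

theorem exists_transfer [Fintype α] [DecidableEq α] [DecidableEq β] (hall : HallCondition R d s)
    (hd : ∀ a, d a ≠ ⊤) {a₀ : α} (ha₀ : d a₀ ≠ 0) :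
    ∃ (b₀ : β) (ε : ℝ≥0∞) (d' : α → ℝ≥0∞) (s' : β → ℝ≥0∞),
      R b₀ a₀ ∧ s b₀ ≠ 0 ∧ d = d' + Pi.single a₀ ε ∧ s = s' + Pi.single b₀ ε ∧
      HallCondition R d' s' ∧ (d' a₀ = 0 ∨ s' b₀ = 0 ∨
        ∃ D, a₀ ∉ D ∧ b₀ ∈ nbhd R D ∧ ∑ a ∈ D, d' a = ∑ b ∈ nbhd R D, s' b) := by
  classical
  obtain ⟨b₀, hR, hb₀⟩ := hall.exists_rel ha₀
  let slack (D : Finset α) := ∑ b ∈ nbhd R D, s b - ∑ a ∈ D, d a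
  let 𝒟 : Finset (Finset α) := {D | a₀ ∉ D ∧ b₀ ∈ nbhd R D}
  -- the largest amount that can be sent from `b₀` to `a₀` without violating Hall's condition
  let ε := min (min (d a₀) (s b₀)) (𝒟.inf slack)
  have hεd : ε ≤ d a₀ := (min_le_left _ _).trans (min_le_left _ _)
  have hεs : ε ≤ s b₀ := (min_le_left _ _).trans (min_le_right _ _)
  have hε : ε ≠ ⊤ := ne_top_of_le_ne_top (hd a₀) hεd
  have hdd : d = (d - Pi.single a₀ ε) + Pi.single a₀ ε := (tsub_add_cancel_of_le fun a => by
    rcases eq_or_ne a a₀ with rfl | h <;> simp [*]).symm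
  have hss : s = (s - Pi.single b₀ ε) + Pi.single b₀ ε := (tsub_add_cancel_of_le fun b => by
    rcases eq_or_ne b b₀ with rfl | h <;> simp [*]).symm
  generalize d - Pi.single a₀ ε = d' at hdd
  generalize s - Pi.single b₀ ε = s' at hss
  have hslack : ∀ D ∈ 𝒟, ∑ a ∈ D, d a + ε ≤ ∑ b ∈ nbhd R D, s b := fun D hD =>
    add_le_of_le_tsub_left_of_le (hall D) ((min_le_right _ _).trans (inf_le hD))
  refine ⟨b₀, ε, d', s', hR, hb₀, hdd, hss, ?_, ?_⟩
  · rw [hdd, hss] at hall hslack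
    exact hall.of_add_single hε hR fun D ha hb => hslack D (by simp [𝒟, ha, hb])
  have hda₀ : d a₀ = d' a₀ + ε := by simpa using congrFun hdd a₀
  have hsb₀ : s b₀ = s' b₀ + ε := by simpa using congrFun hss b₀
  by_cases hmin : min (d a₀) (s b₀) ≤ 𝒟.inf slack
  · have hεmin : ε = min (d a₀) (s b₀) := min_eq_left hmin
    rcases min_choice (d a₀) (s b₀) with h | h
    · exact .inl ((ENNReal.add_left_inj hε).1 (by rw [zero_add, ← hda₀, hεmin, h]))
    · exact .inr (.inl ((ENNReal.add_left_inj hε).1 (by rw [zero_add, ← hsb₀, hεmin, h])))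
  replace hmin := not_le.1 hmin
  have h𝒟 : 𝒟.Nonempty := nonempty_iff_ne_empty.2 fun h => by simp [h] at hmin
  obtain ⟨D, hD, hDinf⟩ := 𝒟.exists_mem_eq_inf h𝒟 slack
  have hεD : ε = slack D := by rw [← hDinf]; exact min_eq_right hmin.le
  obtain ⟨ha₀D, hb₀D⟩ : a₀ ∉ D ∧ b₀ ∈ nbhd R D := by simpa [𝒟] using hD
  refine .inr (.inr ⟨D, ha₀D, hb₀D, (ENNReal.add_left_inj hε).1 ?_⟩)
  calc ∑ a ∈ D, d' a + ε = ∑ a ∈ D, d a + slack D := by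
        rw [hdd, ← hεD]; simp [sum_add_distrib, ha₀D]
    _ = ∑ b ∈ nbhd R D, s b := add_tsub_cancel_of_le (hall D)
    _ = ∑ b ∈ nbhd R D, s' b + ε := by rw [hss]; simp [sum_add_distrib, hb₀D]

end HallCondition

theorem card_filter_ne_zero_le [Fintype α] {f g : α → ℝ≥0∞} (h : f ≤ g) :
    #{a | f a ≠ 0} ≤ #{a | g a ≠ 0} :=
  card_le_card (monotone_filter_right _ fun a _ ha => ne_bot_of_le_ne_bot ha (h a))

theorem card_filter_ne_zero_lt [Fintype α] {f g : α → ℝ≥0∞} (h : f ≤ g) {a : α} (hg : g a ≠ 0)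
    (hf : f a = 0) : #{a | f a ≠ 0} < #{a | g a ≠ 0} :=
  card_lt_card ((ssubset_iff_of_subset (monotone_filter_right _ fun a _ ha =>
    ne_bot_of_le_ne_bot ha (h a))).2 ⟨a, by simpa using hg, by simpa using hf⟩)

theorem exists_isTransport_of_hallCondition [Fintype α] {d : α → ℝ≥0∞} {s : β → ℝ≥0∞}
    (hd : ∀ a, d a ≠ ⊤) (hall : HallCondition R d s) : ∃ f, IsTransport R d s f := by
  classical
  induction hn : #{a | d a ≠ 0} + #{b | s b ≠ 0} using Nat.strong_induction_on
    generalizing d s with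
  | _ n ih =>
  subst hn
  have smaller : ∀ d₁ s₁, d₁ ≤ d → s₁ ≤ s →
      ((∃ a, d a ≠ 0 ∧ d₁ a = 0) ∨ ∃ b, s b ≠ 0 ∧ s₁ b = 0) →
      HallCondition R d₁ s₁ → ∃ f, IsTransport R d₁ s₁ f := by
    intro d₁ s₁ hd₁ hs₁ hlt hall₁
    refine ih _ ?_ (fun a => ne_top_of_le_ne_top (hd a) (hd₁ a)) hall₁ rfl
    rcases hlt with ⟨a, ha, ha₁⟩ | ⟨b, hb, hb₁⟩
    · exact add_lt_add_of_lt_of_le (card_filter_ne_zero_lt hd₁ ha ha₁)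
        (card_filter_ne_zero_le hs₁)
    · exact add_lt_add_of_le_of_lt (card_filter_ne_zero_le hd₁)
        (card_filter_ne_zero_lt hs₁ hb hb₁)
  obtain rfl | ⟨a₀, ha₀⟩ : d = 0 ∨ ∃ a, d a ≠ 0 := by
    by_cases h : d = 0
    exacts [.inl h, .inr (Function.ne_iff.1 h)]
  · exact ⟨0, .zero s⟩
  obtain ⟨b₀, ε, d', s', hR, hb₀, rfl, rfl, hall', hcases⟩ := hall.exists_transfer hd ha₀
  suffices ∃ f, IsTransport R d' s' f from
    let ⟨f, hf⟩ := this; ⟨_, hf.add (.single hR ε)⟩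
  rcases hcases with h | h | ⟨D, ha₀D, hb₀D, htight⟩
  · exact smaller d' s' le_self_add le_self_add (.inl ⟨a₀, ha₀, h⟩) hall'
  · exact smaller d' s' le_self_add le_self_add (.inr ⟨b₀, hb₀, h⟩) hall'
  have hfin : ∑ a ∈ D, d' a ≠ ⊤ :=
    ENNReal.sum_ne_top.2 fun a _ => ne_top_of_le_ne_top (hd a) le_self_add
  obtain ⟨f₁, hf₁⟩ := smaller _ _ ((Set.indicator_le_self _ _).trans le_self_add)
    ((Set.indicator_le_self _ _).trans le_self_add)
    (.inl ⟨a₀, ha₀, Set.indicator_of_notMem (by simpa using ha₀D) _⟩) (hall'.restrict D)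
  obtain ⟨f₂, hf₂⟩ := smaller _ _ ((Set.indicator_le_self _ _).trans le_self_add)
    ((Set.indicator_le_self _ _).trans le_self_add)
    (.inr ⟨b₀, hb₀, Set.indicator_of_notMem (by simpa using hb₀D) _⟩)
    (hall'.compl htight hfin)
  exact ⟨f₁ + f₂, by simpa only [Set.indicator_self_add_compl] using hf₁.add hf₂⟩

end Finite

theorem tsum_preimage_finset {ι : Type*} (φ : β → ι) (N : Finset ι) (g : β → ℝ≥0∞) :
    ∑' b : φ ⁻¹' N, g b = ∑ i ∈ N, ∑' b : φ ⁻¹' {i}, g b := by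
  rw [← Set.biUnion_preimage_singleton]
  exact Summable.tsum_finset_bUnion_disjoint (Set.pairwiseDisjoint_fiber φ _)
    fun _ _ => ENNReal.summable

section Infinite

variable {R : β → α → Prop} {d : α → ℝ≥0∞} {s : β → ℝ≥0∞}

theorem exists_isTransport_of_fintype [Fintype α] (hd : ∀ a, d a ≠ ⊤) (hs : ∑' b, s b ≠ ⊤)
    (hall : ∀ D : Finset α, ∑ a ∈ D, d a ≤ ∑' b : {b | ∃ a ∈ D, R b a}, s b) :
    ∃ f, IsTransport R d s f := by
  classical
  -- suppliers with the same neighbourhood are pooled into one supplier of a finite problem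
  let nb (b : β) : Finset α := {a | R b a}
  let S (T : Finset α) : ℝ≥0∞ := ∑' b : nb ⁻¹' {T}, s b
  have hS : ∀ T, S T ≠ ⊤ := fun T =>
    ne_top_of_le_ne_top hs (ENNReal.tsum_comp_le_tsum_of_injective Subtype.val_injective s)
  have hallS : HallCondition (fun T a => a ∈ T) d S := fun D => by
    have : nb ⁻¹' (nbhd (fun (T : Finset α) a => a ∈ T) D : Set (Finset α)) =
        {b | ∃ a ∈ D, R b a} := by
      ext b; simp [nb, mem_nbhd]
    rw [← tsum_preimage_finset, this]
    exact hall D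
  obtain ⟨g, hg⟩ := exists_isTransport_of_hallCondition hd hallS
  refine ⟨fun b a => g (nb b) a / S (nb b) * s b, fun b a h => ?_, fun a => ?_, fun b => ?_⟩
  · simp [hg.support (nb b) a (by simpa [nb] using h)]
  · calc ∑' b, g (nb b) a / S (nb b) * s b
        = ∑' b : nb ⁻¹' (univ : Finset (Finset α)), g (nb b) a / S (nb b) * s b := by
          rw [coe_univ, Set.preimage_univ]
          exact (tsum_univ fun b => g (nb b) a / S (nb b) * s b).symm
      _ = ∑ T, ∑' b : nb ⁻¹' {T}, g (nb b) a / S (nb b) * s b :=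
          tsum_preimage_finset nb univ fun b => g (nb b) a / S (nb b) * s b
      _ = ∑ T, g T a / S T * S T := sum_congr rfl fun T _ => by
          rw [← ENNReal.tsum_mul_left]
          exact tsum_congr fun ⟨b, (hb : nb b = T)⟩ => by rw [hb]
      _ = ∑ T, g T a := sum_congr rfl fun T _ => by
          rcases eq_or_ne (S T) 0 with h | h
          · simp [h, le_zero_iff.1 (h ▸ hg.le_supply T a)]
          · exact ENNReal.div_mul_cancel h (hS T)
      _ = d a := (tsum_fintype fun T => g T a).symm.trans (hg.demand a)
  · calc ∑' a, g (nb b) a / S (nb b) * s b = (∑' a, g (nb b) a) / S (nb b) * s b := by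
          simp only [div_eq_mul_inv, ENNReal.tsum_mul_right]
      _ ≤ S (nb b) / S (nb b) * s b := by gcongr; exact hg.supply _
      _ ≤ s b := mul_le_of_le_one_left' ENNReal.div_self_le_one

theorem exists_isTransport_indicator (hd : ∀ a, d a ≠ ⊤) (hs : ∑' b, s b ≠ ⊤)
    (hall : ∀ D : Finset α, ∑ a ∈ D, d a ≤ ∑' b : {b | ∃ a ∈ D, R b a}, s b) (F : Finset α) :
    ∃ g, IsTransport R ((F : Set α).indicator d) s g := by
  obtain ⟨g, hg⟩ := exists_isTransport_of_fintype (R := fun b (a : F) => R b a)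
    (d := fun a => d a) (fun a => hd a) hs fun D => by
      have : {b | ∃ a ∈ D, R b a} = {b | ∃ a ∈ D.map (.subtype _), R b a} := by ext; simp
      have h := hall (D.map (.subtype _))
      rw [sum_map, ← this] at h
      exact h
  have hF : ∀ a (ha : a ∈ F) (h : F → ℝ≥0∞), Function.extend Subtype.val h 0 a = h ⟨a, ha⟩ :=
    fun a ha h => Subtype.val_injective.extend_apply h 0 ⟨a, ha⟩
  refine ⟨fun b => Function.extend Subtype.val (g b) 0, fun b a h => ?_, fun a => ?_, fun b => ?_⟩
  · by_cases ha : a ∈ F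
    · exact (hF a ha _).trans (hg.support b ⟨a, ha⟩ h)
    · simp [ha]
  · by_cases ha : a ∈ F
    · simp only [hF a ha, Set.indicator_of_mem (mem_coe.2 ha)]
      exact hg.demand ⟨a, ha⟩
    · simp [ha]
  · rw [tsum_extend_zero Subtype.val_injective]
    exact hg.supply b

theorem tsum_le_of_tendsto {ι κ : Type*} {L : Filter ι} [L.NeBot] {u : ι → κ → ℝ≥0∞}
    {v : κ → ℝ≥0∞} {c : ℝ≥0∞} (hlim : ∀ k, Tendsto (u · k) L (𝓝 (v k)))
    (hle : ∀ᶠ i in L, ∑' k, u i k ≤ c) : ∑' k, v k ≤ c := by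
  rw [ENNReal.tsum_eq_iSup_sum]
  exact iSup_le fun G => le_of_tendsto (tendsto_finsetSum G fun k _ => hlim k)
    (hle.mono fun i hi => (ENNReal.sum_le_tsum G).trans hi)

theorem IsTransport.of_tendsto {ι : Type*} {L : Filter ι} [L.NeBot] {dₗ : ι → α → ℝ≥0∞}
    {g : ι → β → α → ℝ≥0∞} {f : β → α → ℝ≥0∞} (hg : ∀ i, IsTransport R (dₗ i) s (g i))
    (hlim : ∀ b a, Tendsto (g · b a) L (𝓝 (f b a))) (hdₗ : ∀ a, ∀ᶠ i in L, dₗ i a = d a)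
    (hs : ∑' b, s b ≠ ⊤) : IsTransport R d s f where
  support b a h := tendsto_nhds_unique (hlim b a) (by simp [(hg _).support b a h])
  supply b := tsum_le_of_tendsto (hlim b) (.of_forall fun i => (hg i).supply b)
  demand a := by
    refine le_antisymm (tsum_le_of_tendsto (hlim · a) ((hdₗ a).mono fun i hi => ?_)) ?_
    · exact ((hg i).demand a).trans hi |>.le
    -- the supplies dominate the flows, so no mass escapes to infinity
    have key : ∀ G : Finset β, d a ≤ ∑' b, f b a + ∑' b : ↥(G : Set β)ᶜ, s b := fun G => by
      refine (ge_of_tendsto ((tendsto_finsetSum G fun b _ => hlim b a).add tendsto_const_nhds)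
        ((hdₗ a).mono fun i hi => ?_)).trans (add_le_add (ENNReal.sum_le_tsum G) le_rfl)
      rw [← hi, ← (hg i).demand a, ← ENNReal.sum_add_tsum_compl G]
      gcongr with b
      exact (hg i).le_supply b a
    simpa using ge_of_tendsto (tendsto_const_nhds.add (ENNReal.tendsto_tsum_compl_atTop_zero hs))
      (.of_forall key)

theorem exists_isTransport (hd : ∀ a, d a ≠ ⊤) (hs : ∑' b, s b ≠ ⊤)
    (hall : ∀ D : Finset α, ∑ a ∈ D, d a ≤ ∑' b : {b | ∃ a ∈ D, R b a}, s b) :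
    ∃ f, IsTransport R d s f := by
  choose g hg using exists_isTransport_indicator hd hs hall
  -- a limit along an ultrafilter of plans for finite sets of demands; `β → α → ℝ≥0∞` is compact
  obtain ⟨𝒰, h𝒰⟩ := exists_ultrafilter_le (atTop : Filter (Finset α))
  obtain ⟨f, hf⟩ : ∃ f, Tendsto g 𝒰 (𝓝 f) := ⟨_, (𝒰.map g).le_nhds_lim⟩
  refine ⟨f, .of_tendsto hg (fun b a => tendsto_pi_nhds.1 (tendsto_pi_nhds.1 hf b) a)
    (fun a => ?_) hs⟩
  filter_upwards [h𝒰 (eventually_ge_atTop {a})] with F hF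
  exact Set.indicator_of_mem (mem_coe.2 (hF (mem_singleton_self a))) d

theorem tsum_indicator_ne_top {C X : Set α} {c : α → ℝ≥0∞} (hX : X ⊆ C)
    (h : ∑' a : C, c a ≠ ⊤) : ∑' a, X.indicator c a ≠ ⊤ := by
  rw [← _root_.tsum_subtype]
  exact ne_top_of_le_ne_top h (ENNReal.tsum_mono_subtype c hX)

theorem hall_indicator_of_forall_subset {A : Set α} {B : Set β} {c : α → ℝ≥0∞} {c' : β → ℝ≥0∞}
    (U : Set α → Set β) (hU : ∀ D ⊆ A, U D ⊆ B ∩ {b | ∃ a ∈ D, R b a})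
    (h : ∀ D ⊆ A, ∑' a : D, c a ≤ ∑' b : U D, c' b) (D : Finset α) :
    ∑ a ∈ D, A.indicator c a ≤ ∑' b : {b | ∃ a ∈ D, R b a}, B.indicator c' b :=
  calc ∑ a ∈ D, A.indicator c a = ∑' a : ↥((D : Set α) ∩ A), c a := by
        rw [_root_.tsum_subtype, ← Set.indicator_indicator, ← _root_.tsum_subtype, tsum_subtype']
    _ ≤ ∑' b : U (D ∩ A), c' b := h _ Set.inter_subset_right
    _ = ∑' b : U (D ∩ A), B.indicator c' b :=
        tsum_congr fun b => (Set.indicator_of_mem (hU _ Set.inter_subset_right b.2).1 _).symm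
    _ ≤ ∑' b : {b | ∃ a ∈ D, R b a}, B.indicator c' b :=
        ENNReal.tsum_mono_subtype _ fun b hb => by
        obtain ⟨a, ha, hR⟩ := (hU _ Set.inter_subset_right hb).2
        exact ⟨a, ha.1, hR⟩

end Infinite

end Transport

section Flow

variable {W : Set ℤ} {nbr : S → S → Prop} {x : S} {η ξ : S → ℤ}

theorem disjoint_R1_S1 (hle : η ≤ ξ) : Disjoint (R1 W nbr x η ξ) (S1 W nbr x η) :=
  Set.disjoint_left.2 fun _ h₁ h₂ => lt_asymm h₁.2.2 (h₂.2.2.trans_le (hle x))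

theorem disjoint_R2_S2 (hle : η ≤ ξ) : Disjoint (R2 W nbr x η ξ) (S2 W nbr x ξ) :=
  Set.disjoint_left.2 fun _ h₁ h₂ => lt_asymm (h₁.2.2.trans_le (hle x)) h₂.2.2

theorem upArrow_subset_S2 {D : Set (S → ℤ)} (hD : D ⊆ R1 W nbr x η ξ) :
    upArrow W nbr x η ξ D ⊆ S2 W nbr x ξ :=
  fun _ ⟨hC, hA, _, ha, hab⟩ => ⟨hC, hA, (hD ha).2.2.trans_le (hab x)⟩

theorem downArrow_subset_S1 {D : Set (S → ℤ)} (hD : D ⊆ R2 W nbr x η ξ) :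
    downArrow W nbr x η ξ D ⊆ S1 W nbr x η :=
  fun _ ⟨hC, hA, _, hb, hab⟩ => ⟨hC, hA, (hab x).trans_lt (hD hb).2.2⟩

theorem isSolution_of_isTransport (hle : η ≤ ξ) {c1 c2 : (S → ℤ) → ℝ≥0∞}
    {fP fM : (S → ℤ) → (S → ℤ) → ℝ≥0∞}
    (hP : IsTransport (fun b a => app η a ≤ app ξ b) ((R1 W nbr x η ξ).indicator c1)
      ((S2 W nbr x ξ).indicator c2) fP)
    (hM : IsTransport (fun a b => app η a ≤ app ξ b) ((R2 W nbr x η ξ).indicator c2)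
      ((S1 W nbr x η).indicator c1) fM) :
    IsSolution W nbr x η ξ c1 c2 (fun b a => fP b a + fM a b) := by
  have hcol : ∀ a, ∑' b : T2 W nbr x η ξ, (fP b a + fM a b) =
      (R1 W nbr x η ξ).indicator c1 a + ∑' b, fM a b := fun a => by
    rw [ENNReal.tsum_add, ← hP.demand,
      tsum_subtype_eq_of_support_subset (f := (fP · a)) fun b hb => .inl (hP.mem_of_ne_zero hb).2,
      tsum_subtype_eq_of_support_subset (f := (fM a ·)) fun b hb => .inr (hM.mem_of_ne_zero hb).1]
  have hrow : ∀ b, ∑' a : T1 W nbr x η ξ, (fP b a + fM a b) =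
      ∑' a, fP b a + (R2 W nbr x η ξ).indicator c2 b := fun b => by
    rw [ENNReal.tsum_add, ← hM.demand,
      tsum_subtype_eq_of_support_subset (f := (fP b ·)) fun a ha => .inr (hP.mem_of_ne_zero ha).1,
      tsum_subtype_eq_of_support_subset (f := (fM · b)) fun a ha => .inl (hM.mem_of_ne_zero ha).2]
  refine ⟨fun b a h => ?_, fun b a h => ?_, fun a ha => ?_, fun a ha => ?_, fun b hb => ?_,
    fun b hb => ?_⟩
  · rcases add_ne_zero.1 h with h | h
    · exact ⟨.inl (hP.mem_of_ne_zero h).2, .inr (hP.mem_of_ne_zero h).1⟩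
    · exact ⟨.inr (hM.mem_of_ne_zero h).1, .inl (hM.mem_of_ne_zero h).2⟩
  · rcases add_ne_zero.1 h with h | h
    exacts [hP.rel_of_ne_zero h, hM.rel_of_ne_zero h]
  · have hS1 := Set.indicator_of_notMem ((disjoint_R1_S1 hle).notMem_of_mem_left ha) c1
    rw [hcol, le_zero_iff.1 ((hM.supply a).trans_eq hS1), add_zero, Set.indicator_of_mem ha]
  · rw [hcol, Set.indicator_of_notMem ((disjoint_R1_S1 hle).notMem_of_mem_right ha), zero_add]
    exact (hM.supply a).trans_eq (Set.indicator_of_mem ha c1)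
  · have hS2 := Set.indicator_of_notMem ((disjoint_R2_S2 hle).notMem_of_mem_left hb) c2
    rw [hrow, le_zero_iff.1 ((hP.supply b).trans_eq hS2), zero_add, Set.indicator_of_mem hb]
  · rw [hrow, Set.indicator_of_notMem ((disjoint_R2_S2 hle).notMem_of_mem_right hb), add_zero]
    exact (hP.supply b).trans_eq (Set.indicator_of_mem hb c2)

end Flow

theorem feasibility_of_Px_general
    {S : Type*} [DecidableEq S]
    (nbr : S → S → Prop)
    (W : Set ℤ)
    (η ξ : S → ℤ) (hle : η ≤ ξ)
    (x : S) (c1 c2 : (S → ℤ) → ℝ≥0∞)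
    (hfin : ∑' a : ChangeSet nbr x, (c1 a.1 + c2 a.1) ≠ ⊤)
    (hC1 : CondC1 W nbr x η ξ c1 c2) (hC2 : CondC2 W nbr x η ξ c1 c2) :
    ∃ f : (S → ℤ) → (S → ℤ) → ℝ≥0∞, (∀ b a, f b a ≠ ⊤) ∧
      IsSolution W nbr x η ξ c1 c2 f := by
  obtain ⟨hfin₁, hfin₂⟩ := ENNReal.add_ne_top.1 (ENNReal.tsum_add ▸ hfin)
  have hR1 := ENNReal.ne_top_of_tsum_ne_top
    (tsum_indicator_ne_top (X := R1 W nbr x η ξ) (fun _ h => h.1) hfin₁)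
  have hR2 := ENNReal.ne_top_of_tsum_ne_top
    (tsum_indicator_ne_top (X := R2 W nbr x η ξ) (fun _ h => h.1) hfin₂)
  obtain ⟨fP, hP⟩ := exists_isTransport hR1
    (tsum_indicator_ne_top (X := S2 W nbr x ξ) (fun _ h => h.1) hfin₂)
    (hall_indicator_of_forall_subset (upArrow W nbr x η ξ)
      (fun _ hD _ hb => ⟨upArrow_subset_S2 hD hb, hb.2.2⟩) hC1)
  obtain ⟨fM, hM⟩ := exists_isTransport hR2
    (tsum_indicator_ne_top (X := S1 W nbr x η) (fun _ h => h.1) hfin₁)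
    (hall_indicator_of_forall_subset (downArrow W nbr x η ξ)
      (fun _ hD _ ha => ⟨downArrow_subset_S1 hD ha, ha.2.2⟩) hC2)
  refine ⟨fun b a => fP b a + fM a b, fun b a => ?_, isSolution_of_isTransport hle hP hM⟩
  exact ENNReal.add_ne_top.2 ⟨ne_top_of_le_ne_top (hR1 a) (hP.le_demand b a),
    ne_top_of_le_ne_top (hR2 b) (hM.le_demand a b)⟩

/-- if conditions (C1) and (C2) hold for the fixed pair `η ≤ ξ` and the
site `x`, then the flow problem `P^x` is feasible: there exists a solution `f`. -/
theorem feasibility_of_Px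
    {S : Type*} [Countable S] [DecidableEq S]
    (nbr : S → S → Prop) (hsym : ∀ x y, nbr x y → nbr y x) (hirr : ∀ x, ¬ nbr x x)
    (W : Set ℤ) (hW : ∀ w ∈ W, 0 ≤ w)
    (η ξ : S → ℤ) (hηΩ : ∀ z, η z ∈ W) (hξΩ : ∀ z, ξ z ∈ W) (hle : η ≤ ξ)
    (x : S) (c1 c2 : (S → ℤ) → ℝ≥0∞)
    (hc1 : ∀ a, c1 a ≠ 0 → a ∈ ChangeSet nbr x ∧ Applicable W η a)
    (hc2 : ∀ b, c2 b ≠ 0 → b ∈ ChangeSet nbr x ∧ Applicable W ξ b)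
    (hfin : ∑' a : ChangeSet nbr x, (c1 a.1 + c2 a.1) ≠ ⊤)
    (hC1 : CondC1 W nbr x η ξ c1 c2) (hC2 : CondC2 W nbr x η ξ c1 c2) :
    ∃ f : (S → ℤ) → (S → ℤ) → ℝ≥0∞, (∀ b a, f b a ≠ ⊤) ∧
      IsSolution W nbr x η ξ c1 c2 f :=
  feasibility_of_Px_general nbr W η ξ hle x c1 c2 hfin hC1 hC2

end IPS
end

section
/- Every solution f to the flow problem P^x satisfies f(b,a) = 0 for every b ∈ R_2^x ∪ B_2^{+x•} and every a ∈ B_1^{+x}. -/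
open scoped ENNReal

namespace IPS

variable {S : Type*} [DecidableEq S]

theorem le_app_of_mem_Cplus {W : Set ℤ} {nbr : S → S → Prop} {x : S} {ζ a : S → ℤ}
    (ha : a ∈ Cplus W nbr x ζ) : ζ ≤ app ζ a := by
  intro z
  obtain rfl | hz := eq_or_ne z x
  · exact ha.2.2.1.le
  · exact (ha.2.2.2 z hz).ge

theorem not_le_app_of_mem_R2 {W : Set ℤ} {nbr : S → S → Prop} {x : S} {η ξ b : S → ℤ}
    (hb : b ∈ R2 W nbr x η ξ) : ¬ η ≤ app ξ b :=
  fun h => (h x).not_gt hb.2.2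

theorem IsSolution.eq_zero_of_mem_Cplus {W : Set ℤ} {nbr : S → S → Prop} {x : S}
    {η ξ : S → ℤ} {c1 c2 : (S → ℤ) → ℝ≥0∞} {f : (S → ℤ) → (S → ℤ) → ℝ≥0∞} {a b : S → ℤ}
    (hf : IsSolution W nbr x η ξ c1 c2 f) (ha : a ∈ Cplus W nbr x η)
    (hb : ¬ η ≤ app ξ b) : f b a = 0 :=
  by_contra fun hne => hb ((le_app_of_mem_Cplus ha).trans (hf.order b a hne))

theorem zero_flow_1_general
    {S : Type*} [DecidableEq S]
    (nbr : S → S → Prop)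
    (W : Set ℤ)
    (η ξ : S → ℤ)
    (x : S) (c1 c2 : (S → ℤ) → ℝ≥0∞)
    (f : (S → ℤ) → (S → ℤ) → ℝ≥0∞)
    (hf : IsSolution W nbr x η ξ c1 c2 f) :
    ∀ b ∈ R2 W nbr x η ξ ∪ B2 η ξ (CplusBull W nbr x ξ),
      ∀ a ∈ B1 η ξ (Cplus W nbr x η), f b a = 0 := by
  rintro b (hb | hb) a ha
  · exact hf.eq_zero_of_mem_Cplus ha.1 (not_le_app_of_mem_R2 hb)
  · exact hf.eq_zero_of_mem_Cplus ha.1 hb.2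

/-- every solution `f` to `P^x` satisfies `f(b,a) = 0` for `b ∈ R_2^x ∪ B_2^{+x•}` and `a ∈ B_1^{+x}`. -/
theorem zero_flow_1
    {S : Type*} [Countable S] [DecidableEq S]
    (nbr : S → S → Prop) (hsym : ∀ x y, nbr x y → nbr y x) (hirr : ∀ x, ¬ nbr x x)
    (W : Set ℤ) (hW : ∀ w ∈ W, 0 ≤ w)
    (η ξ : S → ℤ) (hηΩ : ∀ z, η z ∈ W) (hξΩ : ∀ z, ξ z ∈ W) (hle : η ≤ ξ)
    (x : S) (c1 c2 : (S → ℤ) → ℝ≥0∞)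
    (hc1 : ∀ a, c1 a ≠ 0 → a ∈ ChangeSet nbr x ∧ Applicable W η a)
    (hc2 : ∀ b, c2 b ≠ 0 → b ∈ ChangeSet nbr x ∧ Applicable W ξ b)
    (hfin : ∑' a : ChangeSet nbr x, (c1 a.1 + c2 a.1) ≠ ⊤)
    (f : (S → ℤ) → (S → ℤ) → ℝ≥0∞) (hfT : ∀ b a, f b a ≠ ⊤)
    (hf : IsSolution W nbr x η ξ c1 c2 f) :
    ∀ b ∈ R2 W nbr x η ξ ∪ B2 η ξ (CplusBull W nbr x ξ),
      ∀ a ∈ B1 η ξ (Cplus W nbr x η), f b a = 0 :=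
  zero_flow_1_general nbr W η ξ x c1 c2 f hf

end IPS
end

section
/- Let y, z be sites with y ~ x, z ~ x and z ≠ y. Then every solution f to the flow problem P^x satisfies f(b,a) = 0 for every b ∈ R_2^x ∪ B_2^{+xz} and every a ∈ B_1^{+xy}. -/
open scoped ENNReal

namespace IPS

variable {S : Type*} [DecidableEq S]

/-!
Suppose `f(b, a) ≠ 0`, so that `η_a ≤ ξ_b`. If `b ∈ R_2^x`, then `ξ_b(x) < η(x) < η_a(x)`.
If `b ∈ B_2^{+xz}`, then `b` changes only `x` and `z` and raises `ξ` at `x`, so the order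
`η ≤ ξ` can only break at `z`: `ξ_b(z) < η(z)`. But `a ∈ C_1^{+xy}` changes only `x` and `y`,
hence leaves `z` untouched, and `η(z) = η_a(z) ≤ ξ_b(z)`.
-/

variable {W : Set ℤ} {nbr : S → S → Prop} {x y z : S}

lemma ChangeSet.exists_eq_single_add_single {δ : S → ℤ} (hδ : δ ∈ ChangeSet nbr x) :
    ∃ y k l, δ = Pi.single x k + Pi.single y l := by
  rcases hδ with ⟨k, -, rfl | rfl⟩ | ⟨y, -, k, l, -, -, rfl | rfl⟩
  · exact ⟨x, k, 0, by simp⟩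
  · exact ⟨x, -k, 0, by simp⟩
  · exact ⟨y, k, -l, rfl⟩
  · exact ⟨y, -k, l, rfl⟩

lemma ChangeSet.apply_eq_zero_of_apply_ne_zero {δ : S → ℤ} (hδ : δ ∈ ChangeSet nbr x)
    {w : S} (hyx : y ≠ x) (hy : δ y ≠ 0) (hwx : w ≠ x) (hwy : w ≠ y) : δ w = 0 := by
  obtain ⟨y', k, l, rfl⟩ := ChangeSet.exists_eq_single_add_single hδ
  simp only [Pi.add_apply, Pi.single_apply, hyx, hwx, if_false, zero_add] at hy ⊢
  split_ifs at hy ⊢ <;> simp_all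

lemma CplusPair.ne {ζ a : S → ℤ} (ha : a ∈ CplusPair W nbr x ζ y) : y ≠ x := by
  rintro rfl
  exact ha.2.2.1.asymm ha.2.2.2

lemma CplusPair.apply_eq_zero {ζ a : S → ℤ} (ha : a ∈ CplusPair W nbr x ζ y) {w : S}
    (hwx : w ≠ x) (hwy : w ≠ y) : a w = 0 := by
  have hy : a y ≠ 0 := by
    have := ha.2.2.2
    simp only [app, Pi.add_apply] at this
    omega
  exact ChangeSet.apply_eq_zero_of_apply_ne_zero ha.1 (CplusPair.ne ha) hy hwx hwy

lemma app_lt_of_mem_B2_CplusPair {η ξ b : S → ℤ} (hle : η ≤ ξ)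
    (hb : b ∈ B2 η ξ (CplusPair W nbr x ξ z)) : app ξ b z < η z := by
  obtain ⟨hbC, hbnle⟩ := hb
  obtain ⟨w, hw⟩ := not_forall.mp hbnle
  by_cases hwz : w = z
  · exact hwz ▸ not_le.mp hw
  by_cases hwx : w = x
  · subst hwx
    exact absurd ((hle w).trans hbC.2.2.1.le) hw
  · have hbw := CplusPair.apply_eq_zero hbC hwx hwz
    simp only [app, Pi.add_apply, hbw, add_zero] at hw
    exact absurd (hle w) hw

lemma not_app_le_app_of_mem_R2 {η ξ a b : S → ℤ} (ha : η x < app η a x)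
    (hb : b ∈ R2 W nbr x η ξ) : ¬ app η a ≤ app ξ b :=
  fun h => (hb.2.2.trans ha).not_ge (h x)

lemma not_app_le_app_of_mem_B2_CplusPair {η ξ a b : S → ℤ} (hle : η ≤ ξ) (hzy : z ≠ y)
    (ha : a ∈ CplusPair W nbr x η y) (hb : b ∈ B2 η ξ (CplusPair W nbr x ξ z)) :
    ¬ app η a ≤ app ξ b := by
  intro h
  have haz : a z = 0 := CplusPair.apply_eq_zero ha (CplusPair.ne hb.1) hzy
  have hbz := app_lt_of_mem_B2_CplusPair hle hb
  have hz := h z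
  simp only [app, Pi.add_apply, haz, add_zero] at hz hbz
  omega

theorem zero_flow_4_general
    {S : Type*} [DecidableEq S]
    (nbr : S → S → Prop)
    (W : Set ℤ)
    (η ξ : S → ℤ) (hle : η ≤ ξ)
    (x : S) (c1 c2 : (S → ℤ) → ℝ≥0∞)
    (y z : S) (hzy : z ≠ y)
    (f : (S → ℤ) → (S → ℤ) → ℝ≥0∞)
    (hf : IsSolution W nbr x η ξ c1 c2 f) :
    ∀ b ∈ R2 W nbr x η ξ ∪ B2 η ξ (CplusPair W nbr x ξ z),
      ∀ a ∈ B1 η ξ (CplusPair W nbr x η y), f b a = 0 := by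
  rintro b hb a ⟨ha, -⟩
  by_contra hne
  have horder := hf.order b a hne
  rcases hb with hb | hb
  · exact not_app_le_app_of_mem_R2 ha.2.2.1 hb horder
  · exact not_app_le_app_of_mem_B2_CplusPair hle hzy ha hb horder

/-- for `y ~ x`, `z ~ x`, `z ≠ y`, every solution `f` to `P^x` satisfies `f(b,a) = 0` for `b ∈ R_2^x ∪ B_2^{+xz}` and `a ∈ B_1^{+xy}`. -/
theorem zero_flow_4
    {S : Type*} [Countable S] [DecidableEq S]
    (nbr : S → S → Prop) (hsym : ∀ x y, nbr x y → nbr y x) (hirr : ∀ x, ¬ nbr x x)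
    (W : Set ℤ) (hW : ∀ w ∈ W, 0 ≤ w)
    (η ξ : S → ℤ) (hηΩ : ∀ z, η z ∈ W) (hξΩ : ∀ z, ξ z ∈ W) (hle : η ≤ ξ)
    (x : S) (c1 c2 : (S → ℤ) → ℝ≥0∞)
    (hc1 : ∀ a, c1 a ≠ 0 → a ∈ ChangeSet nbr x ∧ Applicable W η a)
    (hc2 : ∀ b, c2 b ≠ 0 → b ∈ ChangeSet nbr x ∧ Applicable W ξ b)
    (hfin : ∑' a : ChangeSet nbr x, (c1 a.1 + c2 a.1) ≠ ⊤)
    (y z : S) (hxy : nbr x y) (hxz : nbr x z) (hzy : z ≠ y)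
    (f : (S → ℤ) → (S → ℤ) → ℝ≥0∞) (hfT : ∀ b a, f b a ≠ ⊤)
    (hf : IsSolution W nbr x η ξ c1 c2 f) :
    ∀ b ∈ R2 W nbr x η ξ ∪ B2 η ξ (CplusPair W nbr x ξ z),
      ∀ a ∈ B1 η ξ (CplusPair W nbr x η y), f b a = 0 :=
  zero_flow_4_general nbr W η ξ hle x c1 c2 y z hzy f hf

end IPS
end

section
/- Let y, z be sites with y ~ x, z ~ x and z ≠ y. Then every solution f to the flow problem P^x satisfies f(b,a) = 0 for every b ∈ B_2^{-xy} and every a ∈ R_1^x ∪ B_1^{-xz}. -/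
/-!
Positive flow `f(b,a)` forces `η_a ≤ ξ_b`. A change `b ∈ C_2^{-xy}` lowers `x` and touches
no site besides `x` and `y`. Hence `η_a(x) ≤ ξ_b(x) < ξ(x)` excludes `a ∈ R_1^x`; and a change
`a ∈ B_1^{-xz}` can only break `η ≤ ξ` at `z`, where `ξ_b(z) = ξ(z)` since `z ≠ y`.
-/

open scoped ENNReal

namespace IPS

variable {S : Type*} [DecidableEq S]

omit [DecidableEq S] in
theorem app_apply (ζ δ : S → ℤ) (w : S) : app ζ δ w = ζ w + δ w := rfl

theorem exists_forall_eq_zero_of_mem_changeSet {nbr : S → S → Prop} {x : S} {δ : S → ℤ}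
    (hδ : δ ∈ ChangeSet nbr x) : ∃ u, ∀ w, w ≠ x → w ≠ u → δ w = 0 := by
  rcases hδ with ⟨k, -, rfl | rfl⟩ | ⟨u, -, k, l, -, -, rfl | rfl⟩
  · exact ⟨x, fun w hwx _ => by simp [hwx]⟩
  · exact ⟨x, fun w hwx _ => by simp [hwx]⟩
  · exact ⟨u, fun w hwx hwu => by simp [hwx, hwu]⟩
  · exact ⟨u, fun w hwx hwu => by simp [hwx, hwu]⟩

theorem eq_of_mem_changeSet_of_apply_ne_zero {nbr : S → S → Prop} {x y w : S}
    {δ : S → ℤ} (hδ : δ ∈ ChangeSet nbr x) (hyx : y ≠ x) (hwx : w ≠ x)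
    (hδy : δ y ≠ 0) (hδw : δ w ≠ 0) : w = y := by
  obtain ⟨u, hu⟩ := exists_forall_eq_zero_of_mem_changeSet hδ
  have hyu : y = u := by_contra fun h => hδy (hu y hyx h)
  exact by_contra fun h => hδw (hu w hwx (hyu ▸ h))

section CminusPair

variable {W : Set ℤ} {nbr : S → S → Prop} {x y : S} {ζ δ : S → ℤ}

theorem apply_neg_of_mem_cminusPair (hδ : δ ∈ CminusPair W nbr x ζ y) : δ x < 0 := by
  have := hδ.2.2.1
  rw [app_apply] at this
  omega

theorem apply_pos_of_mem_cminusPair (hδ : δ ∈ CminusPair W nbr x ζ y) : 0 < δ y := by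
  have := hδ.2.2.2
  rw [app_apply] at this
  omega

theorem ne_of_mem_cminusPair (hδ : δ ∈ CminusPair W nbr x ζ y) : y ≠ x := by
  rintro rfl
  exact (apply_neg_of_mem_cminusPair hδ).not_gt (apply_pos_of_mem_cminusPair hδ)

theorem apply_eq_zero_of_mem_cminusPair (hδ : δ ∈ CminusPair W nbr x ζ y) {w : S}
    (hwx : w ≠ x) (hwy : w ≠ y) : δ w = 0 :=
  by_contra fun h => hwy <| eq_of_mem_changeSet_of_apply_ne_zero hδ.1
    (ne_of_mem_cminusPair hδ) hwx (apply_pos_of_mem_cminusPair hδ).ne' h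

theorem lt_app_of_mem_b1_cminusPair {η ξ : S → ℤ} (hle : η ≤ ξ)
    (hδ : δ ∈ B1 η ξ (CminusPair W nbr x η y)) : ξ y < app η δ y := by
  obtain ⟨hδC, hnle⟩ := hδ
  rw [Pi.le_def, not_forall] at hnle
  obtain ⟨w, hw⟩ := hnle
  rw [app_apply, not_le] at hw
  have hδw : 0 < δ w := by linarith [hle w]
  have hwx : w ≠ x := by
    rintro rfl
    exact (apply_neg_of_mem_cminusPair hδC).not_gt hδw
  have hwy : w = y := by_contra fun h => hδw.ne' (apply_eq_zero_of_mem_cminusPair hδC hwx h)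
  rw [app_apply, ← hwy]
  exact hw

end CminusPair

theorem zero_flow_5_general
    {S : Type*} [DecidableEq S]
    (nbr : S → S → Prop)
    (W : Set ℤ)
    (η ξ : S → ℤ) (hle : η ≤ ξ)
    (x : S) (c1 c2 : (S → ℤ) → ℝ≥0∞)
    (y z : S) (hzy : z ≠ y)
    (f : (S → ℤ) → (S → ℤ) → ℝ≥0∞)
    (hf : IsSolution W nbr x η ξ c1 c2 f) :
    ∀ b ∈ B2 η ξ (CminusPair W nbr x ξ y),
      ∀ a ∈ R1 W nbr x η ξ ∪ B1 η ξ (CminusPair W nbr x η z), f b a = 0 := by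
  rintro b ⟨hb, -⟩ a ha
  by_contra hne
  have hord := hf.order b a hne
  have hbx := apply_neg_of_mem_cminusPair hb
  rcases ha with ⟨-, -, hax⟩ | haB
  · have := hord x
    simp only [app_apply] at this hax
    omega
  · have hzx : z ≠ x := ne_of_mem_cminusPair haB.1
    have hbz : b z = 0 := apply_eq_zero_of_mem_cminusPair hb hzx hzy
    have hviol := lt_app_of_mem_b1_cminusPair hle haB
    have := hord z
    simp only [app_apply] at this hviol
    omega

/-- for `y ~ x`, `z ~ x`, `z ≠ y`, every solution `f` to `P^x` satisfies `f(b,a) = 0` for `b ∈ B_2^{-xy}` and `a ∈ R_1^x ∪ B_1^{-xz}`. -/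
theorem zero_flow_5
    {S : Type*} [Countable S] [DecidableEq S]
    (nbr : S → S → Prop) (hsym : ∀ x y, nbr x y → nbr y x) (hirr : ∀ x, ¬ nbr x x)
    (W : Set ℤ) (hW : ∀ w ∈ W, 0 ≤ w)
    (η ξ : S → ℤ) (hηΩ : ∀ z, η z ∈ W) (hξΩ : ∀ z, ξ z ∈ W) (hle : η ≤ ξ)
    (x : S) (c1 c2 : (S → ℤ) → ℝ≥0∞)
    (hc1 : ∀ a, c1 a ≠ 0 → a ∈ ChangeSet nbr x ∧ Applicable W η a)
    (hc2 : ∀ b, c2 b ≠ 0 → b ∈ ChangeSet nbr x ∧ Applicable W ξ b)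
    (hfin : ∑' a : ChangeSet nbr x, (c1 a.1 + c2 a.1) ≠ ⊤)
    (y z : S) (hxy : nbr x y) (hxz : nbr x z) (hzy : z ≠ y)
    (f : (S → ℤ) → (S → ℤ) → ℝ≥0∞) (hfT : ∀ b a, f b a ≠ ⊤)
    (hf : IsSolution W nbr x η ξ c1 c2 f) :
    ∀ b ∈ B2 η ξ (CminusPair W nbr x ξ y),
      ∀ a ∈ R1 W nbr x η ξ ∪ B1 η ξ (CminusPair W nbr x η z), f b a = 0 :=
  zero_flow_5_general nbr W η ξ hle x c1 c2 y z hzy f hf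

end IPS
end

section
/- If the flow problem P^x admits a solution, then it admits a solution f̃ such that f̃(b,a) = 0 for every b ∈ S_2^x and every a ∈ S_1^x. -/
open scoped ENNReal

namespace IPS

variable {S : Type*} [DecidableEq S]

section

variable {W : Set ℤ} {nbr : S → S → Prop} {x : S} {η ξ : S → ℤ}

theorem disjoint_S1_R1 (hle : η x ≤ ξ x) : Disjoint (S1 W nbr x η) (R1 W nbr x η ξ) :=
  Set.disjoint_left.2 fun _ hS hR => (hS.2.2.trans_le hle).not_gt hR.2.2

theorem disjoint_S2_R2 (hle : η x ≤ ξ x) : Disjoint (S2 W nbr x ξ) (R2 W nbr x η ξ) :=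
  Set.disjoint_left.2 fun _ hS hR => (hR.2.2.trans_le hle).not_gt hS.2.2

/-- Lowering a solution keeps it a solution, as long as the columns indexed by `R_1^x`
and the rows indexed by `R_2^x`, whose sums are prescribed exactly, are left untouched. -/
theorem IsSolution.of_le {c1 c2 : (S → ℤ) → ℝ≥0∞} {f g : (S → ℤ) → (S → ℤ) → ℝ≥0∞}
    (hf : IsSolution W nbr x η ξ c1 c2 f) (hgf : ∀ b a, g b a ≤ f b a)
    (hR1 : ∀ b, ∀ a ∈ R1 W nbr x η ξ, g b a = f b a)
    (hR2 : ∀ b ∈ R2 W nbr x η ξ, ∀ a, g b a = f b a) :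
    IsSolution W nbr x η ξ c1 c2 g where
  domain b a hg := hf.domain b a fun h => hg (le_antisymm (h ▸ hgf b a) bot_le)
  order b a hg := hf.order b a fun h => hg (le_antisymm (h ▸ hgf b a) bot_le)
  eq_R1 a ha := by simpa only [hR1 _ a ha] using hf.eq_R1 a ha
  le_S1 a ha := (ENNReal.tsum_le_tsum fun b : T2 W nbr x η ξ => hgf b.1 a).trans (hf.le_S1 a ha)
  eq_R2 b hb := by simpa only [hR2 b hb] using hf.eq_R2 b hb
  le_S2 b hb := (ENNReal.tsum_le_tsum fun a : T1 W nbr x η ξ => hgf b a.1).trans (hf.le_S2 b hb)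

end

theorem exists_solution_vanishing_on_S2_S1_general
    {S : Type*} [DecidableEq S]
    (nbr : S → S → Prop)
    (W : Set ℤ)
    (η ξ : S → ℤ) (hle : η ≤ ξ)
    (x : S) (c1 c2 : (S → ℤ) → ℝ≥0∞)
    (f : (S → ℤ) → (S → ℤ) → ℝ≥0∞) (hfT : ∀ b a, f b a ≠ ⊤)
    (hf : IsSolution W nbr x η ξ c1 c2 f) :
    ∃ ft : (S → ℤ) → (S → ℤ) → ℝ≥0∞, (∀ b a, ft b a ≠ ⊤) ∧
      IsSolution W nbr x η ξ c1 c2 ft ∧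
      ∀ b ∈ S2 W nbr x ξ, ∀ a ∈ S1 W nbr x η, ft b a = 0 := by
  classical
  set ft : (S → ℤ) → (S → ℤ) → ℝ≥0∞ :=
    fun b a => if b ∈ S2 W nbr x ξ ∧ a ∈ S1 W nbr x η then 0 else f b a
  have hft_of_not_mem {b a} (h : ¬ (b ∈ S2 W nbr x ξ ∧ a ∈ S1 W nbr x η)) : ft b a = f b a :=
    if_neg h
  refine ⟨ft, fun b a => ?_, hf.of_le (fun b a => ?_) (fun b a ha => ?_) (fun b hb a => ?_),
    fun b hb a ha => if_pos ⟨hb, ha⟩⟩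
  · unfold ft; split_ifs <;> simp [hfT]
  · unfold ft; split_ifs <;> simp
  · exact hft_of_not_mem fun h => (disjoint_S1_R1 (hle x)).notMem_of_mem_left h.2 ha
  · exact hft_of_not_mem fun h => (disjoint_S2_R2 (hle x)).notMem_of_mem_left h.1 hb

/-- if the flow problem `P^x` admits a solution, then it admits a solution
`f̃` vanishing on `S_2^x × S_1^x`. -/
theorem exists_solution_vanishing_on_S2_S1
    {S : Type*} [Countable S] [DecidableEq S]
    (nbr : S → S → Prop) (hsym : ∀ x y, nbr x y → nbr y x) (hirr : ∀ x, ¬ nbr x x)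
    (W : Set ℤ) (hW : ∀ w ∈ W, 0 ≤ w)
    (η ξ : S → ℤ) (hηΩ : ∀ z, η z ∈ W) (hξΩ : ∀ z, ξ z ∈ W) (hle : η ≤ ξ)
    (x : S) (c1 c2 : (S → ℤ) → ℝ≥0∞)
    (hc1 : ∀ a, c1 a ≠ 0 → a ∈ ChangeSet nbr x ∧ Applicable W η a)
    (hc2 : ∀ b, c2 b ≠ 0 → b ∈ ChangeSet nbr x ∧ Applicable W ξ b)
    (hfin : ∑' a : ChangeSet nbr x, (c1 a.1 + c2 a.1) ≠ ⊤)
    (f : (S → ℤ) → (S → ℤ) → ℝ≥0∞) (hfT : ∀ b a, f b a ≠ ⊤)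
    (hf : IsSolution W nbr x η ξ c1 c2 f) :
    ∃ ft : (S → ℤ) → (S → ℤ) → ℝ≥0∞, (∀ b a, ft b a ≠ ⊤) ∧
      IsSolution W nbr x η ξ c1 c2 ft ∧
      ∀ b ∈ S2 W nbr x ξ, ∀ a ∈ S1 W nbr x η, ft b a = 0 :=
  exists_solution_vanishing_on_S2_S1_general nbr W η ξ hle x c1 c2 f hfT hf

end IPS
end

section
/- Let c^1 be the BDM rates with parameter vector (φ^1, φ_A^1, μ^1, λ^1, N, N_A, M) and c^2 the BDM rates with parameter vector (φ^2, φ_A^2, μ^2, λ^2, N, N_A, M), and set λ^i_{k0}(r) = μ^i_k(r)/(2d) for 1 ≤ k ≤ M, i = 1, 2. Assume that for all r, s ∈ W^{2d} with r ≤ s componentwise: (a) φ^1(r) ≥ φ^2(s) and φ_A^1(r) ≥ φ_A^2(s); (b) ∑_{i=1}^m λ^1_{ij}(r) ≤ ∑_{i=1}^m λ^2_{ik}(s) for all m, k, j with 1 ≤ m ≤ M and 1 ≤ k ≤ j ≤ N; (c) ∑_{j=0}^n λ^1_{ij}(r) ≥ ∑_{j=0}^n λ^2_{lj}(s) for all n,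 i, l with 0 ≤ n ≤ N and 1 ≤ i ≤ l ≤ M. Then for every site x ∈ ℤ^d and all configurations η, ξ ∈ Ω with η ≤ ξ, conditions (C1) and (C2) hold, where c^1_a is the BDM rate of the change a from η under the first parameter vector and c^2_b is the BDM rate of the change b from ξ under the second parameter vector. -/
open scoped ENNReal

namespace IPS

variable {S : Type*} [DecidableEq S]

/-- Neighbour relation on `ℤ^d`: `‖x − y‖₁ = 1`. -/
def nbrZ (d : ℕ) (x y : Fin d → ℤ) : Prop := (∑ i, |x i - y i|) = 1

/-- The restriction of the configuration `ζ` to the `2d` nearest neighbours of `x`,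
indexed by the coordinate direction and the sign of the shift. -/
def profile {d : ℕ} (ζ : (Fin d → ℤ) → ℤ) (x : Fin d → ℤ) : Fin d × Bool → ℤ :=
  fun j => ζ (fun i => x i + if i = j.1 then (if j.2 then 1 else -1) else 0)

/-- `c` is the rate function of the BDM model with parameter vector
`(φ, φA, μ, lam, N, NA, M)`:  `c ζ δ` is the rate of the change `δ` from the
configuration `ζ`.  Births of one individual occur at rate `ζ(x)·1{ζ(x)<N}`; deaths of
one individual at rate `ζ(x)(φA(r)1{ζ(x)≤NA} + φ(r)1{ζ(x)>NA}) + μ₁(r)1{ζ(x)>N−M}`;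
catastrophic deaths of `k ≥ 2` individuals at rate `μ_k(r)1{ζ(x)−k ≥ N−M}`; migrations
`(ζ(x), ζ(y)) → (ζ(x)−k, ζ(y)+l)` at rate `λ_{kl}(r)1{ζ(x)−k ≥ N−M, ζ(y)+l ≤ N}`;
all other changes have rate `0`.  Here `r` is the profile of `ζ` at the neighbours of
the site where the change originates. -/
def IsBDMRate (d N NA M : ℕ)
    (φ φA : ((Fin d × Bool) → ℤ) → ℝ≥0∞)
    (μ : ℕ → ((Fin d × Bool) → ℤ) → ℝ≥0∞)
    (lam : ℕ → ℕ → ((Fin d × Bool) → ℤ) → ℝ≥0∞)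
    (c : ((Fin d → ℤ) → ℤ) → ((Fin d → ℤ) → ℤ) → ℝ≥0∞) : Prop :=
  (∀ ζ x, c ζ (Pi.single x 1) = if ζ x < N then ((ζ x).toNat : ℝ≥0∞) else 0) ∧
  (∀ ζ x, c ζ (Pi.single x (-1)) =
      ((ζ x).toNat : ℝ≥0∞) * (if ζ x ≤ NA then φA (profile ζ x) else φ (profile ζ x)) +
        (if (N : ℤ) - M < ζ x then μ 1 (profile ζ x) else 0)) ∧
  (∀ ζ x k, 2 ≤ k → k ≤ M →
      c ζ (Pi.single x (-(k : ℤ))) =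
        if (N : ℤ) - M ≤ ζ x - k then μ k (profile ζ x) else 0) ∧
  (∀ ζ x y k l, nbrZ d x y → 1 ≤ k → k ≤ M → 1 ≤ l → l ≤ N →
      c ζ (Pi.single x (-(k : ℤ)) + Pi.single y (l : ℤ)) =
        if (N : ℤ) - M ≤ ζ x - k ∧ ζ y + l ≤ N then lam k l (profile ζ x) else 0) ∧
  (∀ ζ δ, c ζ δ ≠ 0 →
      (∃ x, δ = Pi.single x 1) ∨
      (∃ x k, 1 ≤ k ∧ k ≤ M ∧ δ = Pi.single x (-(k : ℤ))) ∨
      (∃ x y k l, nbrZ d x y ∧ 1 ≤ k ∧ k ≤ M ∧ 1 ≤ l ∧ l ≤ N ∧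
        δ = Pi.single x (-(k : ℤ)) + Pi.single y (l : ℤ)))

/-!
Write `Δ = ξ(x) - η(x) ≥ 0`. In both conditions the left-hand side is bounded by a sum over an
explicit finite family of changes, grouped so that each group is compared with changes that lie in
`D₁^↑`, resp. `D₂^↓`, and that are pairwise distinct.

For (C1), a change of positive rate in `D₁` is either the birth at `x`, possible only when `Δ = 0`
(and then both rates equal `η(x)`), or a migration from a neighbour `y` removing `k` individuals at
`y` and adding `l > Δ` at `x`. For fixed `(y, l)` let `m` be the largest `k` that occurs: the
migrations of `ξ` removing `k ≤ m` at `y` and adding `l - Δ` at `x` lie in `D₁^↑`, and (b) with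
`j = l` compares the two masses.

For (C2), a change of positive rate in `D₂` removes some `l > Δ` individuals at `x`. For fixed `l`,
the changes of `η` removing `l - Δ` at `x` (the death, and the migrations to each neighbour `y`
adding at most the largest amount added at `y` by a migration of the group) lie in `D₂^↓`.
Spreading `μ_l` evenly over the `2d` neighbours, (c) applies neighbour by neighbour, while (a)
bounds the part of the death rate proportional to the population, which occurs only for `l = 1`.
-/

section Lattice
variable {d : ℕ}

def neighbour (x : Fin d → ℤ) (j : Fin d × Bool) : Fin d → ℤ :=
  fun i => x i + if i = j.1 then (if j.2 then 1 else -1) else 0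

lemma nbrZ_comm {x y : Fin d → ℤ} : nbrZ d x y ↔ nbrZ d y x := by
  simp only [nbrZ, abs_sub_comm]

lemma nbrZ_neighbour (x : Fin d → ℤ) (j : Fin d × Bool) : nbrZ d x (neighbour x j) := by
  have h : ∀ i, |x i - neighbour x j i| = if i = j.1 then 1 else 0 := by
    intro i
    unfold neighbour
    split_ifs <;> simp
  simp [nbrZ, h]

lemma neighbour_ne (x : Fin d → ℤ) (j : Fin d × Bool) : neighbour x j ≠ x := fun h => by
  have := congrFun h j.1
  unfold neighbour at this
  split_ifs at this <;> omega

lemma neighbour_injective (x : Fin d → ℤ) : Function.Injective (neighbour x) := by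
  rintro ⟨i, s⟩ ⟨i', s'⟩ h
  have hi := congrFun h i
  have hi' := congrFun h i'
  unfold neighbour at hi hi'
  simp only at hi hi'
  by_cases hii : i = i' <;> cases s <;> cases s' <;> simp_all

lemma exists_eq_neighbour {x y : Fin d → ℤ} (h : nbrZ d x y) : ∃ j, y = neighbour x j := by
  have hsum : ∑ i, |x i - y i| = 1 := h
  have hnn : ∀ i ∈ Finset.univ, 0 ≤ |x i - y i| := fun i _ => abs_nonneg _
  obtain ⟨i₀, -, hi₀⟩ : ∃ i₀ ∈ Finset.univ, |x i₀ - y i₀| ≠ 0 := by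
    by_contra! h0
    rw [Finset.sum_eq_zero h0] at hsum
    exact zero_ne_one hsum
  have hother : ∀ i ≠ i₀, y i = x i := by
    intro i hi
    have := Finset.add_le_sum hnn (Finset.mem_univ i₀) (Finset.mem_univ i) (Ne.symm hi)
    have := abs_nonneg (x i - y i)
    have := abs_nonneg (x i₀ - y i₀)
    have := abs_eq_zero.mp (by omega : |x i - y i| = 0)
    omega
  have hi₀' : |x i₀ - y i₀| = 1 := by
    have := Finset.single_le_sum hnn (Finset.mem_univ i₀)
    have := abs_nonneg (x i₀ - y i₀)
    omega
  refine ⟨(i₀, decide (y i₀ = x i₀ + 1)), funext fun i => ?_⟩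
  unfold neighbour
  by_cases hi : i = i₀
  · subst hi
    rw [if_pos rfl]
    rcases abs_eq zero_le_one |>.mp hi₀' with h' | h' <;> split_ifs with hs <;>
      simp only [decide_eq_true_eq] at hs <;> omega
  · simp [hi, hother i hi]

end Lattice

section Changes
variable {S : Type*} [DecidableEq S]

def migration (u v : S) (k l : ℕ) : S → ℤ := Pi.single u (-(k : ℤ)) + Pi.single v (l : ℤ)

variable {u v z : S} {k l : ℕ}

lemma migration_apply_left (h : u ≠ v) : migration u v k l u = -k := by
  simp [migration, h]

lemma migration_apply_right (h : u ≠ v) : migration u v k l v = l := by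
  simp [migration, Ne.symm h]

lemma migration_apply_of_ne (hu : z ≠ u) (hv : z ≠ v) : migration u v k l z = 0 := by
  simp [migration, hu, hv]

lemma migration_apply (h : u ≠ v) :
    migration u v k l z = if z = u then -(k : ℤ) else if z = v then (l : ℤ) else 0 := by
  split_ifs with hu hv
  · subst hu
    exact migration_apply_left h
  · subst hv
    exact migration_apply_right h
  · exact migration_apply_of_ne hu ‹_›

lemma migration_mem_changeSet {nbr : S → S → Prop} (h : nbr u v) (hk : 1 ≤ k) (hl : 1 ≤ l) :
    migration u v k l ∈ ChangeSet nbr u :=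
  Or.inr ⟨v, h, k, l, by omega, by omega, Or.inr rfl⟩

lemma migration_mem_changeSet_right {nbr : S → S → Prop} (h : nbr v u) (hk : 1 ≤ k)
    (hl : 1 ≤ l) : migration u v k l ∈ ChangeSet nbr v :=
  Or.inr ⟨u, h, l, k, by omega, by omega, Or.inl (add_comm _ _)⟩

lemma single_mem_changeSet {nbr : S → S → Prop} (x : S) {n : ℤ} (hn : n ≠ 0) :
    Pi.single x n ∈ ChangeSet nbr x := by
  rcases hn.lt_or_gt with h | h
  · exact Or.inl ⟨-n, by omega, Or.inr (by rw [neg_neg])⟩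
  · exact Or.inl ⟨n, h, Or.inl rfl⟩

end Changes

section Applicability
variable {S : Type*} {n : ℤ} {η ξ a b : S → ℤ}

lemma applicable_of_app_le (hb : Applicable (Set.Icc 0 n) ξ b) (hab : app η a ≤ app ξ b)
    (h0 : ∀ z, 0 ≤ η z + a z) : Applicable (Set.Icc 0 n) η a :=
  fun z => ⟨h0 z, (hab z).trans (hb z).2⟩

lemma applicable_of_le_app (ha : Applicable (Set.Icc 0 n) η a) (hab : app η a ≤ app ξ b)
    (hn : ∀ z, ξ z + b z ≤ n) : Applicable (Set.Icc 0 n) ξ b :=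
  fun z => ⟨(ha z).1.trans (hab z), hn z⟩

end Applicability

section Sums
variable {β ι : Type*} {s : Set β} {f : β → ℝ≥0∞}

lemma tsum_subtype_le_sum_indicator_comp (T : Finset ι) (e : ι → β)
    (h : ∀ b ∈ s, f b ≠ 0 → ∃ i ∈ T, e i = b) :
    ∑' b : s, f b ≤ ∑ i ∈ T, s.indicator f (e i) := by
  classical
  rw [tsum_subtype, tsum_eq_sum (s := T.image e)]
  · exact Finset.sum_image_le_of_nonneg fun _ _ => zero_le
  · intro b hb
    by_contra hne
    obtain ⟨hbs, hfb⟩ := Set.indicator_apply_ne_zero.mp hne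
    obtain ⟨i, hi, rfl⟩ := h b hbs hfb
    exact hb (Finset.mem_image_of_mem e hi)

lemma sum_indicator_comp_le_tsum_subtype (T : Finset ι) {e : ι → β} (he : Set.InjOn e T) :
    ∑ i ∈ T, s.indicator f (e i) ≤ ∑' b : s, f b := by
  classical
  rw [tsum_subtype, ← Finset.sum_image he]
  exact ENNReal.sum_le_tsum _

lemma sum_le_sum_Icc_of_support {s : Finset ℕ} {f g : ℕ → ℝ≥0∞} {n : ℕ}
    (h : ∀ k ∈ s, f k ≠ 0 → k ∈ Finset.Icc 1 n ∧ f k ≤ g k) :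
    ∑ k ∈ s, f k ≤ ∑ k ∈ Finset.Icc 1 n, g k := by
  rw [← Finset.sum_filter_ne_zero]
  refine (Finset.sum_le_sum fun k hk => ?_).trans
    (Finset.sum_le_sum_of_subset fun k hk => (h k (Finset.mem_filter.mp hk).1
      (Finset.mem_filter.mp hk).2).1)
  exact (h k (Finset.mem_filter.mp hk).1 (Finset.mem_filter.mp hk).2).2

end Sums

section SupportSup
variable {s : Finset ℕ} {f : ℕ → ℝ≥0∞}

/-- The largest `k ∈ s` with `f k ≠ 0`, and `0` if there is none. -/
noncomputable def supportSup (s : Finset ℕ) (f : ℕ → ℝ≥0∞) : ℕ := (s.filter (f · ≠ 0)).sup id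

lemma le_supportSup {k : ℕ} (hk : k ∈ s) (hf : f k ≠ 0) : k ≤ supportSup s f :=
  Finset.le_sup (f := id) (Finset.mem_filter.mpr ⟨hk, hf⟩)

lemma supportSup_le {n : ℕ} (h : ∀ k ∈ s, k ≤ n) : supportSup s f ≤ n :=
  Finset.sup_le fun k hk => h k (Finset.mem_filter.mp hk).1

lemma supportSup_mem (h : 0 < supportSup s f) : supportSup s f ∈ s ∧ f (supportSup s f) ≠ 0 := by
  obtain ⟨k, hk, hsup⟩ := Finset.exists_mem_eq_sup (s.filter (f · ≠ 0))
    (Finset.nonempty_iff_ne_empty.mpr fun he => by simp [supportSup, he] at h) id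
  rw [supportSup, hsup]
  exact Finset.mem_filter.mp hk

end SupportSup

section Directions
variable {d : ℕ}

lemma sum_div_two_mul_card (hd : 1 ≤ d) (a : ℝ≥0∞) :
    ∑ _j : Fin d × Bool, a / (2 * (d : ℝ≥0∞)) = a := by
  rw [Finset.sum_const, Finset.card_univ, Fintype.card_prod, Fintype.card_fin, Fintype.card_bool,
    nsmul_eq_mul, Nat.cast_mul, Nat.cast_two, mul_comm (d : ℝ≥0∞)]
  exact ENNReal.mul_div_cancel (mul_ne_zero two_ne_zero (Nat.cast_ne_zero.mpr (by omega)))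
    (by finiteness)

lemma add_sum_le_add_sum_of_div {N : ℕ} (hd : 1 ≤ d) {a₁ a₂ : ℝ≥0∞} {f₁ f₂ : ℕ → ℝ≥0∞}
    (h : ∀ n ≤ N, a₂ / (2 * (d : ℝ≥0∞)) + ∑ k ∈ Finset.Icc 1 n, f₂ k ≤
      a₁ / (2 * (d : ℝ≥0∞)) + ∑ k ∈ Finset.Icc 1 n, f₁ k)
    {m : Fin d × Bool → ℕ} (hm : ∀ j, m j ≤ N) :
    a₂ + ∑ j, ∑ k ∈ Finset.Icc 1 (m j), f₂ k ≤ a₁ + ∑ j, ∑ k ∈ Finset.Icc 1 (m j), f₁ k := by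
  rw [← sum_div_two_mul_card hd a₁, ← sum_div_two_mul_card hd a₂, ← Finset.sum_add_distrib,
    ← Finset.sum_add_distrib]
  exact Finset.sum_le_sum fun j _ => h (m j) (hm j)

end Directions

section Encodings
variable {d : ℕ}

/-- The changes raising the population at `x`: the birth (`none`), and the migrations from the
`j`-th neighbour that remove `k` individuals there and add `l` at `x` (`some (j, l, k)`). -/
def arrival (x : Fin d → ℤ) : Option ((Fin d × Bool) × ℕ × ℕ) → (Fin d → ℤ) → ℤ
  | none => Pi.single x 1
  | some (j, l, k) => migration (neighbour x j) x k l

/-- The changes removing `k` individuals at `x`: the death (`none`), and the migrations to the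
`j`-th neighbour that add `l` individuals there (`some (j, l)`). -/
def departure (x : Fin d → ℤ) (k : ℕ) : Option ((Fin d × Bool) × ℕ) → (Fin d → ℤ) → ℤ
  | none => Pi.single x (-(k : ℤ))
  | some (j, l) => migration x (neighbour x j) k l

lemma arrival_inj (x : Fin d → ℤ) {o o' : Option ((Fin d × Bool) × ℕ × ℕ)}
    (ho : ∀ p ∈ o, 1 ≤ p.2.2) (ho' : ∀ p ∈ o', 1 ≤ p.2.2) (h : arrival x o = arrival x o') :
    o = o' := by
  have key : ∀ j l k o, 1 ≤ k → arrival x o = arrival x (some (j, l, k)) →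
      o = some (j, l, k) := by
    intro j l k o hk h
    have hy := congrFun h (neighbour x j)
    have hx := congrFun h x
    rcases o with _ | ⟨j', l', k'⟩ <;> simp only [arrival] at hx hy <;>
      rw [migration_apply_left (neighbour_ne x j)] at hy
    · rw [Pi.single_eq_of_ne (neighbour_ne x j)] at hy
      omega
    · rw [migration_apply_right (neighbour_ne x _), migration_apply_right (neighbour_ne x _)] at hx
      by_cases hj : j' = j
      · subst hj
        rw [migration_apply_left (neighbour_ne x _)] at hy
        simp only [Option.some.injEq, Prod.mk.injEq, true_and]
        omega
      · rw [migration_apply_of_ne ((neighbour_injective x).ne (Ne.symm hj)) (neighbour_ne x j)]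
          at hy
        omega
  rcases o' with _ | ⟨j', l', k'⟩
  · rcases o with _ | ⟨j, l, k⟩
    · rfl
    · exact (key _ _ _ _ (ho _ rfl) h.symm).symm
  · exact key _ _ _ _ (ho' _ rfl) h

lemma departure_apply_self (x : Fin d → ℤ) (k : ℕ) (o : Option ((Fin d × Bool) × ℕ)) :
    departure x k o x = -k := by
  rcases o with _ | ⟨j, l⟩
  · simp [departure]
  · exact migration_apply_left (neighbour_ne x j).symm

lemma departure_nonneg (x : Fin d → ℤ) (k : ℕ) (o : Option ((Fin d × Bool) × ℕ)) {z : Fin d → ℤ}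
    (hz : z ≠ x) : 0 ≤ departure x k o z := by
  rcases o with _ | ⟨j, l⟩
  · rw [departure, Pi.single_eq_of_ne hz]
  · rw [departure, migration_apply (neighbour_ne x j).symm, if_neg hz]
    split_ifs <;> omega

lemma departure_inj (x : Fin d → ℤ) {k k' : ℕ} {o o' : Option ((Fin d × Bool) × ℕ)}
    (ho : ∀ q ∈ o, 1 ≤ q.2) (ho' : ∀ q ∈ o', 1 ≤ q.2) (h : departure x k o = departure x k' o') :
    k = k' ∧ o = o' := by
  have key : ∀ k j l o, 1 ≤ l → departure x k o = departure x k (some (j, l)) →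
      o = some (j, l) := by
    intro k j l o hl h
    have hy := congrFun h (neighbour x j)
    rcases o with _ | ⟨j', l'⟩ <;> simp only [departure] at hy <;>
      rw [migration_apply_right (neighbour_ne x j).symm] at hy
    · rw [Pi.single_eq_of_ne (neighbour_ne x j)] at hy
      omega
    · by_cases hj : j' = j
      · subst hj
        rw [migration_apply_right (neighbour_ne x _).symm] at hy
        simp only [Option.some.injEq, Prod.mk.injEq, true_and]
        omega
      · rw [migration_apply_of_ne (neighbour_ne x j) ((neighbour_injective x).ne (Ne.symm hj))]
          at hy
        omega
  have hk : k = k' := by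
    have := congrFun h x
    simp only [departure_apply_self] at this
    omega
  subst hk
  refine ⟨rfl, ?_⟩
  rcases o with _ | ⟨j, l⟩
  · rcases o' with _ | ⟨j', l'⟩
    · rfl
    · exact (key _ _ _ _ (ho' _ rfl) h)
  · exact (key _ _ _ _ (ho _ rfl) h.symm).symm

lemma arrival_sub_injOn (x : Fin d → ℤ) (Δ : ℕ) {T : Finset ((Fin d × Bool) × ℕ × ℕ)}
    (hT : ∀ p ∈ T, Δ < p.2.1 ∧ 1 ≤ p.2.2) :
    Set.InjOn (fun o : Option ((Fin d × Bool) × ℕ × ℕ) =>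
      arrival x (o.map (Prod.map id (Prod.map (· - Δ) id)))) T.insertNone := by
  have hvalid : ∀ o ∈ T.insertNone, ∀ p ∈ o.map (Prod.map id (Prod.map (· - Δ) id)), 1 ≤ p.2.2 := by
    rintro (_ | p) ho q hq
    · cases hq
    · obtain rfl := Option.mem_some_iff.mp hq
      exact (hT p (Finset.some_mem_insertNone.mp ho)).2
  intro o ho o' ho' h
  have h' := arrival_inj x (hvalid o ho) (hvalid o' ho') h
  rcases o with _ | ⟨j, l, k⟩ <;> rcases o' with _ | ⟨j', l', k'⟩
  · rfl
  · cases h'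
  · cases h'
  · have hl : Δ < l := (hT _ (Finset.some_mem_insertNone.mp ho)).1
    have hl' : Δ < l' := (hT _ (Finset.some_mem_insertNone.mp ho')).1
    simp only [Option.map_some, Option.some.injEq, Prod.map, id, Prod.mk.injEq] at h' ⊢
    exact ⟨h'.1, by omega, h'.2.2⟩

lemma departure_sub_injOn (x : Fin d → ℤ) (Δ : ℕ)
    {T : Finset (ℕ × Option ((Fin d × Bool) × ℕ))} (hT : ∀ p ∈ T, Δ < p.1 ∧ ∀ q ∈ p.2, 1 ≤ q.2) :
    Set.InjOn (fun p : ℕ × Option ((Fin d × Bool) × ℕ) => departure x (p.1 - Δ) p.2) T := by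
  intro p hp q hq h
  have hpq := departure_inj x (hT p hp).2 (hT q hq).2 h
  have := (hT p hp).1
  have := (hT q hq).1
  exact Prod.ext (by omega) hpq.2

end Encodings

section DeathRate
variable {d : ℕ}

noncomputable def naturalDeathRate (NA : ℕ) (φ φA : ((Fin d × Bool) → ℤ) → ℝ≥0∞)
    (ζ : (Fin d → ℤ) → ℤ) (x : Fin d → ℤ) : ℝ≥0∞ :=
  ((ζ x).toNat : ℝ≥0∞) * (if ζ x ≤ NA then φA (profile ζ x) else φ (profile ζ x))

lemma naturalDeathRate_le {NA : ℕ} {φ1 φA1 φ2 φA2 : ((Fin d × Bool) → ℤ) → ℝ≥0∞}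
    {η ξ : (Fin d → ℤ) → ℤ} {x : Fin d → ℤ}
    (ha : φ2 (profile ξ x) ≤ φ1 (profile η x) ∧ φA2 (profile ξ x) ≤ φA1 (profile η x))
    (hx : ξ x = η x) :
    naturalDeathRate NA φ2 φA2 ξ x ≤ naturalDeathRate NA φ1 φA1 η x := by
  unfold naturalDeathRate
  rw [hx]
  gcongr
  split_ifs
  exacts [ha.2, ha.1]

end DeathRate

section Rates
variable {d N NA M : ℕ} {φ φA : ((Fin d × Bool) → ℤ) → ℝ≥0∞}
  {μ : ℕ → ((Fin d × Bool) → ℤ) → ℝ≥0∞} {lam : ℕ → ℕ → ((Fin d × Bool) → ℤ) → ℝ≥0∞}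
  {c : ((Fin d → ℤ) → ℤ) → ((Fin d → ℤ) → ℤ) → ℝ≥0∞}

namespace IsBDMRate

lemma rate_migration (hc : IsBDMRate d N NA M φ φA μ lam c) (ζ : (Fin d → ℤ) → ℤ)
    {x y : Fin d → ℤ} (hxy : nbrZ d x y) {k l : ℕ} (hk : 1 ≤ k) (hkM : k ≤ M) (hl : 1 ≤ l)
    (hlN : l ≤ N) :
    c ζ (migration x y k l) =
      if (N : ℤ) - M ≤ ζ x - k ∧ ζ y + l ≤ N then lam k l (profile ζ x) else 0 :=
  hc.2.2.2.1 ζ x y k l hxy hk hkM hl hlN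

lemma rate_death (hc : IsBDMRate d N NA M φ φA μ lam c) (ζ : (Fin d → ℤ) → ℤ) (x : Fin d → ℤ)
    {k : ℕ} (hk : 1 ≤ k) (hkM : k ≤ M) :
    c ζ (Pi.single x (-(k : ℤ))) =
      (if k = 1 then naturalDeathRate NA φ φA ζ x else 0) +
        if (N : ℤ) - M ≤ ζ x - k then μ k (profile ζ x) else 0 := by
  rcases (show k = 1 ∨ 2 ≤ k by omega) with rfl | hk2
  · have hcond : (N : ℤ) - M ≤ ζ x - 1 ↔ (N : ℤ) - M < ζ x := by omega
    simp only [if_true, Nat.cast_one, hcond]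
    exact hc.2.1 ζ x
  · rw [if_neg (by omega), zero_add]
    exact hc.2.2.1 ζ x k hk2 hkM

lemma exists_arrival_eq (hc : IsBDMRate d N NA M φ φA μ lam c) {ζ δ : (Fin d → ℤ) → ℤ}
    {x : Fin d → ℤ} (h0 : c ζ δ ≠ 0) (hpos : 0 < δ x) :
    ∃ o ∈ (Finset.univ ×ˢ Finset.Icc 1 N ×ˢ Finset.Icc 1 M).insertNone, δ = arrival x o := by
  rcases hc.2.2.2.2 ζ δ h0 with ⟨x', rfl⟩ | ⟨x', k, hk1, hkM, rfl⟩ |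
    ⟨x', y', k, l, hxy, hk1, hkM, hl1, hlN, rfl⟩
  · obtain rfl : x' = x := by
      by_contra h
      simp [Ne.symm h] at hpos
    exact ⟨none, Finset.none_mem_insertNone, rfl⟩
  · simp only [Pi.single_apply] at hpos
    split_ifs at hpos <;> omega
  · obtain rfl : y' = x := by
      by_contra h
      simp only [Pi.add_apply, Pi.single_apply, Ne.symm h, if_false] at hpos
      split_ifs at hpos <;> omega
    obtain ⟨j, rfl⟩ := exists_eq_neighbour (nbrZ_comm.mp hxy)
    exact ⟨some (j, l, k), by simp [hl1, hlN, hk1, hkM], rfl⟩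

lemma exists_departure_eq (hc : IsBDMRate d N NA M φ φA μ lam c) {ζ δ : (Fin d → ℤ) → ℤ}
    {x : Fin d → ℤ} (h0 : c ζ δ ≠ 0) (hneg : δ x < 0) :
    ∃ k ∈ Finset.Icc 1 M, ∃ o ∈ (Finset.univ ×ˢ Finset.Icc 1 N).insertNone,
      δ = departure x k o := by
  rcases hc.2.2.2.2 ζ δ h0 with ⟨x', rfl⟩ | ⟨x', k, hk1, hkM, rfl⟩ |
    ⟨x', y', k, l, hxy, hk1, hkM, hl1, hlN, rfl⟩
  · simp only [Pi.single_apply] at hneg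
    split_ifs at hneg <;> omega
  · obtain rfl : x' = x := by
      by_contra h
      simp [Ne.symm h] at hneg
    exact ⟨k, Finset.mem_Icc.mpr ⟨hk1, hkM⟩, none, Finset.none_mem_insertNone, rfl⟩
  · obtain rfl : x' = x := by
      by_contra h
      simp only [Pi.add_apply, Pi.single_apply, Ne.symm h, if_false] at hneg
      split_ifs at hneg <;> omega
    obtain ⟨j, rfl⟩ := exists_eq_neighbour hxy
    exact ⟨k, Finset.mem_Icc.mpr ⟨hk1, hkM⟩, some (j, l), by simp [hl1, hlN], rfl⟩

end IsBDMRate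

end Rates

section Dominance
variable {S : Type*} [DecidableEq S] {nbr : S → S → Prop} {N : ℕ} {x y : S} {η ξ : S → ℤ}
  {D : Set (S → ℤ)}

lemma migration_mem_upArrow (hξ : ∀ z, ξ z ∈ Set.Icc (0 : ℤ) N) (hle : η ≤ ξ)
    (hD : D ⊆ R1 (Set.Icc 0 N) nbr x η ξ) (hxy : nbr x y) (hyx : y ≠ x) {m l k l' : ℕ}
    (ha : migration y x m l ∈ D) (hk : 1 ≤ k) (hkm : k ≤ m) (hl' : 1 ≤ l')
    (hl : η x + l = ξ x + l') :
    migration y x k l' ∈ upArrow (Set.Icc 0 N) nbr x η ξ D := by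
  have hax := ((hD ha).2.1 x).2
  rw [migration_apply_right hyx] at hax
  have happ : app η (migration y x m l) ≤ app ξ (migration y x k l') := fun z => by
    have : η z ≤ ξ z := hle z
    simp only [app, Pi.add_apply, migration_apply hyx]
    split_ifs <;> subst_vars <;> omega
  refine ⟨migration_mem_changeSet_right hxy hk hl',
    applicable_of_le_app (hD ha).2.1 happ fun z => ?_, _, ha, happ⟩
  have := (hξ z).2
  rw [migration_apply hyx]
  split_ifs <;> subst_vars <;> omega

lemma single_mem_downArrow (hη : ∀ z, η z ∈ Set.Icc (0 : ℤ) N) (hle : η ≤ ξ)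
    (hD : D ⊆ R2 (Set.Icc 0 N) nbr x η ξ) {b : S → ℤ} (hb : b ∈ D) (hb0 : ∀ z ≠ x, 0 ≤ b z)
    {i : ℕ} (hi : 1 ≤ i) (hbx : ξ x + b x = η x - i) :
    Pi.single x (-(i : ℤ)) ∈ downArrow (Set.Icc 0 N) nbr x η ξ D := by
  have hbx0 := ((hD hb).2.1 x).1
  have happ : app η (Pi.single x (-(i : ℤ))) ≤ app ξ b := fun z => by
    simp only [app, Pi.add_apply]
    rcases eq_or_ne z x with rfl | hz
    · rw [Pi.single_eq_same]
      omega
    · have : η z ≤ ξ z := hle z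
      have := hb0 z hz
      rw [Pi.single_eq_of_ne hz]
      omega
  refine ⟨single_mem_changeSet x (by omega), applicable_of_app_le (hD hb).2.1 happ fun z => ?_,
    b, hb, happ⟩
  have := (hη z).1
  rcases eq_or_ne z x with rfl | hz
  · rw [Pi.single_eq_same]
    omega
  · rw [Pi.single_eq_of_ne hz]
    omega

lemma migration_mem_downArrow (hη : ∀ z, η z ∈ Set.Icc (0 : ℤ) N) (hle : η ≤ ξ)
    (hD : D ⊆ R2 (Set.Icc 0 N) nbr x η ξ) (hxy : nbr x y) (hyx : y ≠ x) {l m i k : ℕ}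
    (hb : migration x y l m ∈ D) (hi : 1 ≤ i) (hk : 1 ≤ k) (hkm : k ≤ m)
    (hl : ξ x - l = η x - i) :
    migration x y i k ∈ downArrow (Set.Icc 0 N) nbr x η ξ D := by
  have hbx := ((hD hb).2.1 x).1
  rw [migration_apply_left hyx.symm] at hbx
  have happ : app η (migration x y i k) ≤ app ξ (migration x y l m) := fun z => by
    have : η z ≤ ξ z := hle z
    simp only [app, Pi.add_apply, migration_apply hyx.symm]
    split_ifs <;> subst_vars <;> omega
  refine ⟨migration_mem_changeSet hxy hi hk,
    applicable_of_app_le (hD hb).2.1 happ fun z => ?_, _, hb, happ⟩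
  have := (hη z).1
  rw [migration_apply hyx.symm]
  split_ifs <;> subst_vars <;> omega

end Dominance

section ConditionC1
variable {d N NA M : ℕ}
  {φ1 φA1 φ2 φA2 : ((Fin d × Bool) → ℤ) → ℝ≥0∞}
  {μ1 μ2 : ℕ → ((Fin d × Bool) → ℤ) → ℝ≥0∞}
  {lam1 lam2 : ℕ → ℕ → ((Fin d × Bool) → ℤ) → ℝ≥0∞}
  {c1 c2 : ((Fin d → ℤ) → ℤ) → ((Fin d → ℤ) → ℤ) → ℝ≥0∞}
  {x : Fin d → ℤ} {η ξ : (Fin d → ℤ) → ℤ} {D : Set ((Fin d → ℤ) → ℤ)} {Δ : ℕ}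

lemma tsum_le_sum_arrivals (hc1 : IsBDMRate d N NA M φ1 φA1 μ1 lam1 c1)
    (hD : D ⊆ R1 (Set.Icc 0 N) (nbrZ d) x η ξ) (hΔ : η x + Δ = ξ x) :
    ∑' a : D, c1 η a ≤ ∑ o ∈ (Finset.univ ×ˢ Finset.Icc (Δ + 1) N ×ˢ Finset.Icc 1 M).insertNone,
      D.indicator (c1 η) (arrival x o) := by
  refine tsum_subtype_le_sum_indicator_comp _ _ fun a ha h0 => ?_
  have hax : ξ x < η x + a x := (hD ha).2.2
  obtain ⟨o, ho, rfl⟩ := hc1.exists_arrival_eq (x := x) h0 (by omega)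
  refine ⟨o, ?_, rfl⟩
  rcases o with _ | ⟨j, l, k⟩
  · exact Finset.none_mem_insertNone
  · have : arrival x (some (j, l, k)) x = l := migration_apply_right (neighbour_ne x j)
    simp only [Finset.some_mem_insertNone, Finset.mem_product, Finset.mem_univ, Finset.mem_Icc,
      true_and] at ho ⊢
    omega

lemma indicator_birth_le (hc1 : IsBDMRate d N NA M φ1 φA1 μ1 lam1 c1)
    (hc2 : IsBDMRate d N NA M φ2 φA2 μ2 lam2 c2) (hle : η ≤ ξ)
    (hξ : ∀ z, ξ z ∈ Set.Icc (0 : ℤ) N) (hD : D ⊆ R1 (Set.Icc 0 N) (nbrZ d) x η ξ) :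
    D.indicator (c1 η) (Pi.single x 1) ≤
      (upArrow (Set.Icc 0 N) (nbrZ d) x η ξ D).indicator (c2 ξ) (Pi.single x 1) := by
  by_cases hbD : Pi.single x 1 ∈ D
  · obtain ⟨-, happ, hlt⟩ := hD hbD
    have hx : η x + 1 ≤ N := by simpa using (happ x).2
    have hxx : ξ x = η x := by
      have : η x ≤ ξ x := hle x
      simp only [app, Pi.add_apply, Pi.single_eq_same] at hlt
      omega
    have hU : Pi.single x 1 ∈ upArrow (Set.Icc 0 N) (nbrZ d) x η ξ D := by
      have happ' : app η (Pi.single x 1) ≤ app ξ (Pi.single x 1) := fun z => by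
        have : η z ≤ ξ z := hle z
        simp only [app, Pi.add_apply]
        omega
      refine ⟨single_mem_changeSet x one_ne_zero, applicable_of_le_app happ happ' fun z => ?_,
        _, hbD, happ'⟩
      rcases eq_or_ne z x with rfl | hz
      · rw [Pi.single_eq_same]
        omega
      · simpa [hz] using (hξ z).2
    rw [Set.indicator_of_mem hbD, Set.indicator_of_mem hU, hc1.1, hc2.1, hxx]
  · simp [hbD]

lemma sum_migrations_into_le (hc1 : IsBDMRate d N NA M φ1 φA1 μ1 lam1 c1)
    (hc2 : IsBDMRate d N NA M φ2 φA2 μ2 lam2 c2) (j : Fin d × Bool)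
    (hb : ∀ m k l, 1 ≤ m → m ≤ M → 1 ≤ k → k ≤ l → l ≤ N →
      ∑ i ∈ Finset.Icc 1 m, lam1 i l (profile η (neighbour x j)) ≤
        ∑ i ∈ Finset.Icc 1 m, lam2 i k (profile ξ (neighbour x j)))
    (hξ : ∀ z, ξ z ∈ Set.Icc (0 : ℤ) N) (hle : η ≤ ξ)
    (hD : D ⊆ R1 (Set.Icc 0 N) (nbrZ d) x η ξ) (hΔ : η x + Δ = ξ x) {l : ℕ}
    (hl : l ∈ Finset.Icc (Δ + 1) N) :
    ∑ k ∈ Finset.Icc 1 M, D.indicator (c1 η) (migration (neighbour x j) x k l) ≤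
      ∑ k ∈ Finset.Icc 1 M, (upArrow (Set.Icc 0 N) (nbrZ d) x η ξ D).indicator (c2 ξ)
        (migration (neighbour x j) x k (l - Δ)) := by
  obtain ⟨hl1, hlN⟩ := Finset.mem_Icc.mp hl
  have hyx : nbrZ d (neighbour x j) x := nbrZ_comm.mp (nbrZ_neighbour x j)
  set m := supportSup (Finset.Icc 1 M) fun k => D.indicator (c1 η) (migration (neighbour x j) x k l)
  have hmM : m ≤ M := supportSup_le fun k hk => (Finset.mem_Icc.mp hk).2
  calc _ ≤ ∑ k ∈ Finset.Icc 1 m, lam1 k l (profile η (neighbour x j)) := by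
        refine sum_le_sum_Icc_of_support fun k hk hF =>
          ⟨Finset.mem_Icc.mpr ⟨(Finset.mem_Icc.mp hk).1, le_supportSup hk hF⟩, ?_⟩
        refine (Set.indicator_le_self _ _ _).trans ?_
        obtain ⟨hk1, hkM⟩ := Finset.mem_Icc.mp hk
        rw [hc1.rate_migration η hyx hk1 hkM (by omega) hlN]
        split_ifs <;> simp
    _ ≤ ∑ k ∈ Finset.Icc 1 m, (upArrow (Set.Icc 0 N) (nbrZ d) x η ξ D).indicator (c2 ξ)
          (migration (neighbour x j) x k (l - Δ)) := by
        rcases Nat.eq_zero_or_pos m with hm | hm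
        · simp [hm]
        obtain ⟨-, hFm⟩ := supportSup_mem hm
        obtain ⟨hmD, hcm⟩ := Set.indicator_apply_ne_zero.mp hFm
        rw [Function.mem_support, hc1.rate_migration η hyx (by omega) hmM (by omega) hlN] at hcm
        obtain ⟨hcond, hxN⟩ : _ ∧ _ := by
          by_contra h
          exact hcm (if_neg h)
        refine (hb m (l - Δ) l hm hmM (by omega) (by omega) hlN).trans_eq
          (Finset.sum_congr rfl fun k hk => ?_)
        obtain ⟨hk1, hkm⟩ := Finset.mem_Icc.mp hk
        have hy : η (neighbour x j) ≤ ξ (neighbour x j) := hle _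
        rw [Set.indicator_of_mem (migration_mem_upArrow hξ hle hD (nbrZ_neighbour x j)
            (neighbour_ne x j) hmD hk1 hkm (by omega) (by omega)),
          hc2.rate_migration ξ hyx hk1 (by omega) (by omega) (by omega), if_pos (by omega)]
    _ ≤ _ := Finset.sum_le_sum_of_subset (Finset.Icc_subset_Icc le_rfl hmM)

lemma condC1_of_isBDMRate (hc1 : IsBDMRate d N NA M φ1 φA1 μ1 lam1 c1)
    (hc2 : IsBDMRate d N NA M φ2 φA2 μ2 lam2 c2)
    (hb : ∀ r s : (Fin d × Bool) → ℤ, (∀ j, r j ∈ Set.Icc (0 : ℤ) N) →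
        (∀ j, s j ∈ Set.Icc (0 : ℤ) N) → r ≤ s →
        ∀ m k j, 1 ≤ m → m ≤ M → 1 ≤ k → k ≤ j → j ≤ N →
        ∑ i ∈ Finset.Icc 1 m, lam1 i j r ≤ ∑ i ∈ Finset.Icc 1 m, lam2 i k s)
    (hη : ∀ z, η z ∈ Set.Icc (0 : ℤ) N) (hξ : ∀ z, ξ z ∈ Set.Icc (0 : ℤ) N) (hle : η ≤ ξ) :
    CondC1 (Set.Icc (0 : ℤ) N) (nbrZ d) x η ξ (c1 η) (c2 ξ) := by
  intro D hD
  obtain ⟨Δ, hΔ⟩ : ∃ Δ : ℕ, η x + Δ = ξ x :=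
    ⟨(ξ x - η x).toNat, by have : η x ≤ ξ x := hle x; omega⟩
  have hT : ∀ p ∈ (Finset.univ : Finset (Fin d × Bool)) ×ˢ Finset.Icc (Δ + 1) N ×ˢ Finset.Icc 1 M,
      Δ < p.2.1 ∧ 1 ≤ p.2.2 := by
    simp only [Finset.mem_product, Finset.mem_Icc]
    omega
  refine (tsum_le_sum_arrivals hc1 hD hΔ).trans (le_trans ?_
    (sum_indicator_comp_le_tsum_subtype _ (arrival_sub_injOn x Δ hT)))
  rw [Finset.sum_insertNone, Finset.sum_insertNone]
  refine add_le_add (indicator_birth_le hc1 hc2 hle hξ hD) ?_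
  simp only [Finset.sum_product, Option.map_some, Prod.map, id, arrival]
  exact Finset.sum_le_sum fun j _ => Finset.sum_le_sum fun l hl =>
    sum_migrations_into_le hc1 hc2 j (hb _ _ (fun _ => hη _) (fun _ => hξ _) (fun _ => hle _))
      hξ hle hD hΔ hl

end ConditionC1

section ConditionC2
variable {d N NA M : ℕ}
  {φ1 φA1 φ2 φA2 : ((Fin d × Bool) → ℤ) → ℝ≥0∞}
  {μ1 μ2 : ℕ → ((Fin d × Bool) → ℤ) → ℝ≥0∞}
  {lam1 lam2 : ℕ → ℕ → ((Fin d × Bool) → ℤ) → ℝ≥0∞}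
  {c1 c2 : ((Fin d → ℤ) → ℤ) → ((Fin d → ℤ) → ℤ) → ℝ≥0∞}
  {x : Fin d → ℤ} {η ξ : (Fin d → ℤ) → ℤ} {D : Set ((Fin d → ℤ) → ℤ)} {Δ : ℕ}

lemma tsum_le_sum_departures (hc2 : IsBDMRate d N NA M φ2 φA2 μ2 lam2 c2)
    (hD : D ⊆ R2 (Set.Icc 0 N) (nbrZ d) x η ξ) (hΔ : η x + Δ = ξ x) :
    ∑' b : D, c2 ξ b ≤
      ∑ p ∈ Finset.Icc (Δ + 1) M ×ˢ (Finset.univ ×ˢ Finset.Icc 1 N).insertNone,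
        D.indicator (c2 ξ) (departure x p.1 p.2) := by
  refine tsum_subtype_le_sum_indicator_comp _ _ fun b hb h0 => ?_
  have hbx : ξ x + b x < η x := (hD hb).2.2
  obtain ⟨k, hk, o, ho, rfl⟩ := hc2.exists_departure_eq (x := x) h0 (by omega)
  rw [departure_apply_self] at hbx
  exact ⟨(k, o), Finset.mem_product.mpr
    ⟨Finset.mem_Icc.mpr ⟨by omega, (Finset.mem_Icc.mp hk).2⟩, ho⟩, rfl⟩

lemma sum_departures_le_rates (hc2 : IsBDMRate d N NA M φ2 φA2 μ2 lam2 c2) {l : ℕ} (hl1 : 1 ≤ l)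
    (hlM : l ≤ M) {m : Fin d × Bool → ℕ} (hm : ∀ j, ∀ k ∈ Finset.Icc 1 N,
      D.indicator (c2 ξ) (departure x l (some (j, k))) ≠ 0 → k ≤ m j) :
    ∑ o ∈ (Finset.univ ×ˢ Finset.Icc 1 N).insertNone, D.indicator (c2 ξ) (departure x l o) ≤
      c2 ξ (Pi.single x (-(l : ℤ))) + ∑ j, ∑ k ∈ Finset.Icc 1 (m j),
        if (N : ℤ) - M ≤ ξ x - l then lam2 l k (profile ξ x) else 0 := by
  rw [Finset.sum_insertNone, Finset.sum_product]
  refine add_le_add (Set.indicator_le_self _ _ _) (Finset.sum_le_sum fun j _ =>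
    sum_le_sum_Icc_of_support fun k hk hF => ⟨?_, (Set.indicator_le_self _ _ _).trans ?_⟩)
  · exact Finset.mem_Icc.mpr ⟨(Finset.mem_Icc.mp hk).1, hm j k hk hF⟩
  · rw [departure, hc2.rate_migration ξ (nbrZ_neighbour x j) hl1 hlM (Finset.mem_Icc.mp hk).1
      (Finset.mem_Icc.mp hk).2]
    split_ifs <;> simp_all

lemma death_migration_rates_le (hd : 1 ≤ d) (hc1 : IsBDMRate d N NA M φ1 φA1 μ1 lam1 c1)
    (hc2 : IsBDMRate d N NA M φ2 φA2 μ2 lam2 c2)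
    (ha : φ2 (profile ξ x) ≤ φ1 (profile η x) ∧ φA2 (profile ξ x) ≤ φA1 (profile η x))
    (hc : ∀ n i l, n ≤ N → 1 ≤ i → i ≤ l → l ≤ M →
        μ2 l (profile ξ x) / (2 * (d : ℝ≥0∞)) + ∑ j ∈ Finset.Icc 1 n, lam2 l j (profile ξ x) ≤
          μ1 i (profile η x) / (2 * (d : ℝ≥0∞)) + ∑ j ∈ Finset.Icc 1 n, lam1 i j (profile η x))
    {i l : ℕ} (hi : 1 ≤ i) (hil : i ≤ l) (hlM : l ≤ M) (hxl : ξ x - l = η x - i)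
    {m : Fin d × Bool → ℕ} (hmN : ∀ j, m j ≤ N) :
    c2 ξ (Pi.single x (-(l : ℤ))) + ∑ j, ∑ k ∈ Finset.Icc 1 (m j),
        (if (N : ℤ) - M ≤ ξ x - l then lam2 l k (profile ξ x) else 0) ≤
      c1 η (Pi.single x (-(i : ℤ))) + ∑ j, ∑ k ∈ Finset.Icc 1 (m j),
        if (N : ℤ) - M ≤ η x - i then lam1 i k (profile η x) else 0 := by
  rw [hc2.rate_death ξ x (by omega) hlM, hc1.rate_death η x hi (by omega), hxl, add_assoc,
    add_assoc]
  refine add_le_add ?_ ?_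
  · split_ifs with h1 h2
    · exact naturalDeathRate_le ha (by omega)
    · omega
    · exact zero_le
    · exact le_rfl
  · split_ifs
    · exact add_sum_le_add_sum_of_div hd (fun n hn => hc n i l hn hi hil hlM) hmN
    · simp

lemma rates_le_sum_departures (hc1 : IsBDMRate d N NA M φ1 φA1 μ1 lam1 c1)
    {U : Set ((Fin d → ℤ) → ℤ)} {i : ℕ} (hi : 1 ≤ i) (hiM : i ≤ M)
    (hdeath : Pi.single x (-(i : ℤ)) ∈ U) {m : Fin d × Bool → ℕ} (hmN : ∀ j, m j ≤ N)
    (hmig : ∀ j, ∀ k ∈ Finset.Icc 1 (m j),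
      migration x (neighbour x j) i k ∈ U ∧ η (neighbour x j) + k ≤ N) :
    c1 η (Pi.single x (-(i : ℤ))) + ∑ j, ∑ k ∈ Finset.Icc 1 (m j),
        (if (N : ℤ) - M ≤ η x - i then lam1 i k (profile η x) else 0) ≤
      ∑ o ∈ (Finset.univ ×ˢ Finset.Icc 1 N).insertNone, U.indicator (c1 η) (departure x i o) := by
  rw [Finset.sum_insertNone, Finset.sum_product, departure, Set.indicator_of_mem hdeath]
  refine add_le_add le_rfl (Finset.sum_le_sum fun j _ => ?_)
  refine le_trans (le_of_eq (Finset.sum_congr rfl fun k hk => ?_))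
    (Finset.sum_le_sum_of_subset (Finset.Icc_subset_Icc le_rfl (hmN j)))
  obtain ⟨hkU, hkN⟩ := hmig j k hk
  obtain ⟨hk1, hkm⟩ := Finset.mem_Icc.mp hk
  rw [departure, Set.indicator_of_mem hkU,
    hc1.rate_migration η (nbrZ_neighbour x j) hi hiM hk1 (hkm.trans (hmN j))]
  simp [hkN]

lemma sum_departures_le (hd : 1 ≤ d) (hc1 : IsBDMRate d N NA M φ1 φA1 μ1 lam1 c1)
    (hc2 : IsBDMRate d N NA M φ2 φA2 μ2 lam2 c2)
    (ha : φ2 (profile ξ x) ≤ φ1 (profile η x) ∧ φA2 (profile ξ x) ≤ φA1 (profile η x))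
    (hc : ∀ n i l, n ≤ N → 1 ≤ i → i ≤ l → l ≤ M →
        μ2 l (profile ξ x) / (2 * (d : ℝ≥0∞)) + ∑ j ∈ Finset.Icc 1 n, lam2 l j (profile ξ x) ≤
          μ1 i (profile η x) / (2 * (d : ℝ≥0∞)) + ∑ j ∈ Finset.Icc 1 n, lam1 i j (profile η x))
    (hη : ∀ z, η z ∈ Set.Icc (0 : ℤ) N) (hle : η ≤ ξ)
    (hD : D ⊆ R2 (Set.Icc 0 N) (nbrZ d) x η ξ) (hΔ : η x + Δ = ξ x) {l : ℕ}
    (hl : l ∈ Finset.Icc (Δ + 1) M) :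
    ∑ o ∈ (Finset.univ ×ˢ Finset.Icc 1 N).insertNone, D.indicator (c2 ξ) (departure x l o) ≤
      ∑ o ∈ (Finset.univ ×ˢ Finset.Icc 1 N).insertNone,
        (downArrow (Set.Icc 0 N) (nbrZ d) x η ξ D).indicator (c1 η) (departure x (l - Δ) o) := by
  obtain ⟨hl1, hlM⟩ := Finset.mem_Icc.mp hl
  have hxl : ξ x - l = η x - ((l - Δ : ℕ) : ℤ) := by omega
  by_cases hzero : ∀ o ∈ (Finset.univ ×ˢ Finset.Icc 1 N).insertNone,
      D.indicator (c2 ξ) (departure x l o) = 0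
  · rw [Finset.sum_eq_zero hzero]
    exact zero_le
  push Not at hzero
  obtain ⟨o₀, -, ho₀⟩ := hzero
  have hdeath := single_mem_downArrow hη hle hD (Set.indicator_apply_ne_zero.mp ho₀).1
    (fun z hz => departure_nonneg x l o₀ hz) (i := l - Δ) (by omega)
    (by rw [departure_apply_self]; omega)
  set m : Fin d × Bool → ℕ := fun j =>
    supportSup (Finset.Icc 1 N) fun k => D.indicator (c2 ξ) (departure x l (some (j, k)))
  have hmN : ∀ j, m j ≤ N := fun j => supportSup_le fun k hk => (Finset.mem_Icc.mp hk).2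
  have hmig : ∀ j, ∀ k ∈ Finset.Icc 1 (m j),
      migration x (neighbour x j) (l - Δ) k ∈ downArrow (Set.Icc 0 N) (nbrZ d) x η ξ D ∧
        η (neighbour x j) + k ≤ N := by
    intro j k hk
    obtain ⟨hk1, hkm⟩ := Finset.mem_Icc.mp hk
    obtain ⟨-, hFm⟩ : m j ∈ Finset.Icc 1 N ∧
        D.indicator (c2 ξ) (departure x l (some (j, m j))) ≠ 0 :=
      supportSup_mem (Nat.lt_of_lt_of_le hk1 hkm)
    have hmD := (Set.indicator_apply_ne_zero.mp hFm).1
    have hyN := ((hD hmD).2.1 (neighbour x j)).2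
    have hy : η (neighbour x j) ≤ ξ (neighbour x j) := hle _
    rw [departure, migration_apply_right (neighbour_ne x j).symm] at hyN
    exact ⟨migration_mem_downArrow hη hle hD (nbrZ_neighbour x j) (neighbour_ne x j) hmD
      (by omega) hk1 hkm hxl, by omega⟩
  calc _ ≤ _ := sum_departures_le_rates hc2 (by omega) hlM fun j k hk hF => le_supportSup hk hF
    _ ≤ _ := death_migration_rates_le hd hc1 hc2 ha hc (by omega) (by omega) hlM hxl hmN
    _ ≤ _ := rates_le_sum_departures hc1 (by omega) (by omega) hdeath hmN hmig

lemma condC2_of_isBDMRate (hd : 1 ≤ d) (hc1 : IsBDMRate d N NA M φ1 φA1 μ1 lam1 c1)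
    (hc2 : IsBDMRate d N NA M φ2 φA2 μ2 lam2 c2)
    (ha : ∀ r s : (Fin d × Bool) → ℤ, (∀ j, r j ∈ Set.Icc (0 : ℤ) N) →
        (∀ j, s j ∈ Set.Icc (0 : ℤ) N) → r ≤ s →
        φ2 s ≤ φ1 r ∧ φA2 s ≤ φA1 r)
    (hc : ∀ r s : (Fin d × Bool) → ℤ, (∀ j, r j ∈ Set.Icc (0 : ℤ) N) →
        (∀ j, s j ∈ Set.Icc (0 : ℤ) N) → r ≤ s →
        ∀ n i l, n ≤ N → 1 ≤ i → i ≤ l → l ≤ M →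
        μ2 l s / (2 * (d : ℝ≥0∞)) + ∑ j ∈ Finset.Icc 1 n, lam2 l j s ≤
          μ1 i r / (2 * (d : ℝ≥0∞)) + ∑ j ∈ Finset.Icc 1 n, lam1 i j r)
    (hη : ∀ z, η z ∈ Set.Icc (0 : ℤ) N) (hξ : ∀ z, ξ z ∈ Set.Icc (0 : ℤ) N) (hle : η ≤ ξ) :
    CondC2 (Set.Icc (0 : ℤ) N) (nbrZ d) x η ξ (c1 η) (c2 ξ) := by
  intro D hD
  obtain ⟨Δ, hΔ⟩ : ∃ Δ : ℕ, η x + Δ = ξ x :=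
    ⟨(ξ x - η x).toNat, by have : η x ≤ ξ x := hle x; omega⟩
  have hT : ∀ p ∈ Finset.Icc (Δ + 1) M ×ˢ
      ((Finset.univ : Finset (Fin d × Bool)) ×ˢ Finset.Icc 1 N).insertNone,
      Δ < p.1 ∧ ∀ q ∈ p.2, 1 ≤ q.2 := by
    rintro ⟨l, o⟩ hp
    simp only [Finset.mem_product, Finset.mem_Icc, Finset.mem_insertNone, Finset.mem_univ,
      true_and] at hp
    exact ⟨by omega, fun q hq => (hp.2 q hq).1⟩
  have hr : ∀ j, profile η x j ∈ Set.Icc (0 : ℤ) N := fun _ => hη _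
  have hs : ∀ j, profile ξ x j ∈ Set.Icc (0 : ℤ) N := fun _ => hξ _
  have hrs : profile η x ≤ profile ξ x := fun _ => hle _
  refine (tsum_le_sum_departures hc2 hD hΔ).trans (le_trans ?_
    (sum_indicator_comp_le_tsum_subtype _ (departure_sub_injOn x Δ hT)))
  rw [Finset.sum_product, Finset.sum_product]
  exact Finset.sum_le_sum fun l hl => sum_departures_le hd hc1 hc2 (ha _ _ hr hs hrs)
    (hc _ _ hr hs hrs) hη hle hD hΔ hl

end ConditionC2

theorem bdm_comparison_general
    (d N NA M : ℕ) (hd : 1 ≤ d)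
    (φ1 φA1 φ2 φA2 : ((Fin d × Bool) → ℤ) → ℝ≥0∞)
    (μ1 μ2 : ℕ → ((Fin d × Bool) → ℤ) → ℝ≥0∞)
    (lam1 lam2 : ℕ → ℕ → ((Fin d × Bool) → ℤ) → ℝ≥0∞)
    (c1 c2 : ((Fin d → ℤ) → ℤ) → ((Fin d → ℤ) → ℤ) → ℝ≥0∞)
    (hc1 : IsBDMRate d N NA M φ1 φA1 μ1 lam1 c1)
    (hc2 : IsBDMRate d N NA M φ2 φA2 μ2 lam2 c2)
    (ha : ∀ r s : (Fin d × Bool) → ℤ, (∀ j, r j ∈ Set.Icc (0 : ℤ) N) →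
        (∀ j, s j ∈ Set.Icc (0 : ℤ) N) → r ≤ s →
        φ2 s ≤ φ1 r ∧ φA2 s ≤ φA1 r)
    (hb : ∀ r s : (Fin d × Bool) → ℤ, (∀ j, r j ∈ Set.Icc (0 : ℤ) N) →
        (∀ j, s j ∈ Set.Icc (0 : ℤ) N) → r ≤ s →
        ∀ m k j, 1 ≤ m → m ≤ M → 1 ≤ k → k ≤ j → j ≤ N →
        ∑ i ∈ Finset.Icc 1 m, lam1 i j r ≤ ∑ i ∈ Finset.Icc 1 m, lam2 i k s)
    (hc : ∀ r s : (Fin d × Bool) → ℤ, (∀ j, r j ∈ Set.Icc (0 : ℤ) N) →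
        (∀ j, s j ∈ Set.Icc (0 : ℤ) N) → r ≤ s →
        ∀ n i l, n ≤ N → 1 ≤ i → i ≤ l → l ≤ M →
        μ2 l s / (2 * (d : ℝ≥0∞)) + ∑ j ∈ Finset.Icc 1 n, lam2 l j s ≤
          μ1 i r / (2 * (d : ℝ≥0∞)) + ∑ j ∈ Finset.Icc 1 n, lam1 i j r) :
    ∀ (x : Fin d → ℤ) (η ξ : (Fin d → ℤ) → ℤ),
      (∀ z, η z ∈ Set.Icc (0 : ℤ) N) → (∀ z, ξ z ∈ Set.Icc (0 : ℤ) N) → η ≤ ξ →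
      CondC1 (Set.Icc (0 : ℤ) N) (nbrZ d) x η ξ (c1 η) (c2 ξ) ∧
      CondC2 (Set.Icc (0 : ℤ) N) (nbrZ d) x η ξ (c1 η) (c2 ξ) :=
  fun _ _ _ hη hξ hle =>
    ⟨condC1_of_isBDMRate hc1 hc2 hb hη hξ hle, condC2_of_isBDMRate hd hc1 hc2 ha hc hη hξ hle⟩

/-- under conditions (a), (b), (c) on two BDM parameter vectors, the
comparison conditions (C1) and (C2) hold at every site for every ordered pair of
configurations. -/
theorem bdm_comparison
    (d N NA M : ℕ) (hd : 1 ≤ d) (hNA1 : 1 ≤ NA) (hNAN : NA ≤ N) (hM1 : 1 ≤ M) (hMN : M ≤ N)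
    (φ1 φA1 φ2 φA2 : ((Fin d × Bool) → ℤ) → ℝ≥0∞)
    (μ1 μ2 : ℕ → ((Fin d × Bool) → ℤ) → ℝ≥0∞)
    (lam1 lam2 : ℕ → ℕ → ((Fin d × Bool) → ℤ) → ℝ≥0∞)
    (c1 c2 : ((Fin d → ℤ) → ℤ) → ((Fin d → ℤ) → ℤ) → ℝ≥0∞)
    (hc1 : IsBDMRate d N NA M φ1 φA1 μ1 lam1 c1)
    (hc2 : IsBDMRate d N NA M φ2 φA2 μ2 lam2 c2)
    (ha : ∀ r s : (Fin d × Bool) → ℤ, (∀ j, r j ∈ Set.Icc (0 : ℤ) N) →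
        (∀ j, s j ∈ Set.Icc (0 : ℤ) N) → r ≤ s →
        φ2 s ≤ φ1 r ∧ φA2 s ≤ φA1 r)
    (hb : ∀ r s : (Fin d × Bool) → ℤ, (∀ j, r j ∈ Set.Icc (0 : ℤ) N) →
        (∀ j, s j ∈ Set.Icc (0 : ℤ) N) → r ≤ s →
        ∀ m k j, 1 ≤ m → m ≤ M → 1 ≤ k → k ≤ j → j ≤ N →
        ∑ i ∈ Finset.Icc 1 m, lam1 i j r ≤ ∑ i ∈ Finset.Icc 1 m, lam2 i k s)
    (hc : ∀ r s : (Fin d × Bool) → ℤ, (∀ j, r j ∈ Set.Icc (0 : ℤ) N) →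
        (∀ j, s j ∈ Set.Icc (0 : ℤ) N) → r ≤ s →
        ∀ n i l, n ≤ N → 1 ≤ i → i ≤ l → l ≤ M →
        μ2 l s / (2 * (d : ℝ≥0∞)) + ∑ j ∈ Finset.Icc 1 n, lam2 l j s ≤
          μ1 i r / (2 * (d : ℝ≥0∞)) + ∑ j ∈ Finset.Icc 1 n, lam1 i j r) :
    ∀ (x : Fin d → ℤ) (η ξ : (Fin d → ℤ) → ℤ),
      (∀ z, η z ∈ Set.Icc (0 : ℤ) N) → (∀ z, ξ z ∈ Set.Icc (0 : ℤ) N) → η ≤ ξ →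
      CondC1 (Set.Icc (0 : ℤ) N) (nbrZ d) x η ξ (c1 η) (c2 ξ) ∧
      CondC2 (Set.Icc (0 : ℤ) N) (nbrZ d) x η ξ (c1 η) (c2 ξ) :=
  bdm_comparison_general d N NA M hd φ1 φA1 φ2 φA2 μ1 μ2 lam1 lam2 c1 c2 hc1 hc2 ha hb hc

end IPS
end

section
/- For every real p with 0 < p < 1, with q = 1 − p, and all integers m, j, k with 1 ≤ k ≤ j ≤ m: ∑_{i=j}^m C(i,j) p^j q^{i−j} ≤ ∑_{i=k}^m C(i,k) p^k q^{i−k}. (Equivalently, the binomial migration rates λ_{il} = λ·C(i,l)p^l q^{i−l}, λ > 0, satisfy ∑_{i=1}^m λ_{ij} ≤ ∑_{i=1}^m λ_{ik} for all 1 ≤ k ≤ j.) -/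
/-!
Write `S j = ∑_{i=j}^m C(i,j) p^j (1-p)^{i-j}`. Pascal's rule and `p + (1 - p) = 1` give the
recurrence `S j = S (j+1) + C(m+1,j+1) p^j (1-p)^{m-j}`, whose last term is nonnegative for
`0 ≤ p ≤ 1`; hence `S` is antitone in `j`.
-/

open Finset

section

variable {R : Type*} [CommRing R]

def binomialRateSum (p : R) (m j : ℕ) : R :=
  ∑ i ∈ Icc j m, (i.choose j : R) * p ^ j * (1 - p) ^ (i - j)

theorem binomialRateSum_eq_succ_add (p : R) (m j : ℕ) :
    binomialRateSum p m j =
      binomialRateSum p m (j + 1) + ((m + 1).choose (j + 1) : R) * p ^ j * (1 - p) ^ (m - j) := by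
  rcases lt_or_ge m j with hmj | hjm
  · simp [binomialRateSum, Icc_eq_empty_of_lt hmj, Icc_eq_empty_of_lt (hmj.trans j.lt_succ_self),
      Nat.choose_eq_zero_of_lt (Nat.succ_lt_succ hmj)]
  induction m, hjm using Nat.le_induction with
  | base => simp [binomialRateSum]
  | succ m hjm ih =>
    unfold binomialRateSum at ih ⊢
    rw [sum_Icc_succ_top (hjm.trans m.le_succ), sum_Icc_succ_top (Nat.succ_le_succ hjm), ih,
      Nat.choose_succ_succ' (m + 1), show m + 1 - j = m - j + 1 by omega,
      show m + 1 - (j + 1) = m - j by omega]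
    push_cast
    ring

end

theorem binomialRateSum_antitone {R : Type*} [CommRing R] [PartialOrder R] [IsOrderedRing R]
    {p : R} (hp0 : 0 ≤ p) (hp1 : p ≤ 1) (m : ℕ) : Antitone (binomialRateSum p m) :=
  antitone_nat_of_succ_le fun j => by
    rw [binomialRateSum_eq_succ_add p m j]
    have hq : 0 ≤ 1 - p := sub_nonneg.mpr hp1
    exact le_add_of_nonneg_right (by positivity)

theorem binomial_rates_first_condition_general
    (p : ℝ) (hp0 : 0 < p) (hp1 : p < 1) (m j k : ℕ)
    (hkj : k ≤ j) :
    ∑ i ∈ Finset.Icc j m, (i.choose j : ℝ) * p ^ j * (1 - p) ^ (i - j) ≤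
      ∑ i ∈ Finset.Icc k m, (i.choose k : ℝ) * p ^ k * (1 - p) ^ (i - k) :=
  binomialRateSum_antitone hp0.le hp1.le m hkj

/-- the binomial migration rates satisfy the first attractiveness
condition: for `0 < p < 1` and `1 ≤ k ≤ j ≤ m`,
`∑_{i=j}^m C(i,j) p^j (1−p)^{i−j} ≤ ∑_{i=k}^m C(i,k) p^k (1−p)^{i−k}`. -/
theorem binomial_rates_first_condition
    (p : ℝ) (hp0 : 0 < p) (hp1 : p < 1) (m j k : ℕ)
    (hk : 1 ≤ k) (hkj : k ≤ j) (hjm : j ≤ m) :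
    ∑ i ∈ Finset.Icc j m, (i.choose j : ℝ) * p ^ j * (1 - p) ^ (i - j) ≤
      ∑ i ∈ Finset.Icc k m, (i.choose k : ℝ) * p ^ k * (1 - p) ^ (i - k) :=
  binomial_rates_first_condition_general p hp0 hp1 m j k hkj
end

section
/- Assume conditions (GSC1) and (GSC2) hold. Then for every nonempty finite set K of integers with min K ≥ b + 1, writing l = min K − b − 1 (so l ≥ 0): ∑_{k∈K} Γ¹(k) ≤ ∑_{l'=l+1}^{a + max K} Γ²(l'). -/
/-!
Write `T f n = ∑' j, f (n + j)` for the tail sums, so that a finite block of a summable sequence is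
a difference of two tails. Enlarging `K` to the interval `[m, M]` between its extreme points
(the rates `Γ¹` are nonnegative), `∑_{k∈K} Γ¹(k) ≤ T Γ¹ m - T Γ¹ (M + 1)`. With `m = b + l + 1`,
(GSC1) bounds `T Γ¹ m` by `T Γ² (l + 1)` and (GSC2) at `k = M` bounds `T Γ¹ (M + 1)` from below
by `T Γ² (a + M + 1)`; the difference of these two tails of `Γ²` is the right-hand side.
-/

open Finset

theorem Summable.sum_Ico_eq_tsum_nat_add_sub {G : Type*} [AddCommGroup G] [TopologicalSpace G]
    [IsTopologicalAddGroup G] [T2Space G] {f : ℕ → G} (hf : Summable f) {m n : ℕ} (h : m ≤ n) :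
    ∑ k ∈ Ico m n, f k = ∑' j, f (m + j) - ∑' j, f (n + j) := by
  simp only [add_comm m, add_comm n]
  rw [sum_Ico_eq_sub _ h, eq_sub_of_add_eq' (hf.sum_add_tsum_nat_add m),
    eq_sub_of_add_eq' (hf.sum_add_tsum_nat_add n)]
  abel

theorem Finset.sum_le_sum_Icc_min'_max' {α N : Type*} [LinearOrder α] [LocallyFiniteOrder α]
    [AddCommMonoid N] [Preorder N] [AddLeftMono N] {f : α → N} (hf : ∀ i, 0 ≤ f i)
    (K : Finset α) (hK : K.Nonempty) :
    ∑ k ∈ K, f k ≤ ∑ k ∈ Icc (K.min' hK) (K.max' hK), f k :=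
  sum_le_sum_of_subset_of_nonneg (fun k hk => mem_Icc.2 ⟨K.min'_le k hk, K.le_max' k hk⟩)
    fun i _ _ => hf i

theorem gsc_set_rate_bound_general
    (Γ1 Γ2 : ℕ → ℝ) (h1 : ∀ k, 0 ≤ Γ1 k)
    (hs1 : Summable Γ1) (hs2 : Summable Γ2) (a b : ℕ)
    (hgsc1 : ∀ l : ℕ, ∑' j : ℕ, Γ1 (b + l + 1 + j) ≤ ∑' j : ℕ, Γ2 (l + 1 + j))
    (hgsc2 : ∀ k : ℕ, ∑' j : ℕ, Γ2 (a + k + 1 + j) ≤ ∑' j : ℕ, Γ1 (k + 1 + j)) :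
    ∀ (K : Finset ℕ) (hK : K.Nonempty), b + 1 ≤ K.min' hK →
      ∑ k ∈ K, Γ1 k ≤ ∑ l' ∈ Finset.Icc (K.min' hK - b) (a + K.max' hK), Γ2 l' := by
  intro K hK hb
  obtain ⟨l, hl⟩ : ∃ l, K.min' hK = b + l + 1 := ⟨K.min' hK - b - 1, by omega⟩
  set M := K.max' hK
  have hmM : b + l + 1 ≤ M + 1 := hl ▸ (K.min'_le M (K.max'_mem hK)).trans M.le_succ
  calc ∑ k ∈ K, Γ1 k ≤ ∑ k ∈ Ico (b + l + 1) (M + 1), Γ1 k := by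
        rw [Ico_add_one_right_eq_Icc, ← hl]
        exact sum_le_sum_Icc_min'_max' h1 K hK
    _ = ∑' j, Γ1 (b + l + 1 + j) - ∑' j, Γ1 (M + 1 + j) := hs1.sum_Ico_eq_tsum_nat_add_sub hmM
    _ ≤ ∑' j, Γ2 (l + 1 + j) - ∑' j, Γ2 (a + M + 1 + j) := sub_le_sub (hgsc1 l) (hgsc2 M)
    _ = ∑ l' ∈ Icc (K.min' hK - b) (a + M), Γ2 l' := by
        rw [← hs2.sum_Ico_eq_tsum_nat_add_sub (by omega), Ico_add_one_right_eq_Icc, hl,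
          show b + l + 1 - b = l + 1 by omega]

/-- under the Gobron–Saada conditions (GSC1) and (GSC2), for every
nonempty finite set `K` of integers with `min K ≥ b + 1`, writing `l = min K − b − 1`,
one has `∑_{k∈K} Γ¹(k) ≤ ∑_{l'=l+1}^{a + max K} Γ²(l')`. -/
theorem gsc_set_rate_bound
    (Γ1 Γ2 : ℕ → ℝ) (h1 : ∀ k, 0 ≤ Γ1 k) (h2 : ∀ k, 0 ≤ Γ2 k)
    (hs1 : Summable Γ1) (hs2 : Summable Γ2) (a b : ℕ)
    (hgsc1 : ∀ l : ℕ, ∑' j : ℕ, Γ1 (b + l + 1 + j) ≤ ∑' j : ℕ, Γ2 (l + 1 + j))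
    (hgsc2 : ∀ k : ℕ, ∑' j : ℕ, Γ2 (a + k + 1 + j) ≤ ∑' j : ℕ, Γ1 (k + 1 + j)) :
    ∀ (K : Finset ℕ) (hK : K.Nonempty), b + 1 ≤ K.min' hK →
      ∑ k ∈ K, Γ1 k ≤ ∑ l' ∈ Finset.Icc (K.min' hK - b) (a + K.max' hK), Γ2 l' :=
  gsc_set_rate_bound_general Γ1 Γ2 h1 hs1 hs2 a b hgsc1 hgsc2
end
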